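/- arXiv:2011.04410 — 8 statements merged into one kernel-verified Lean document; each statement's English description precedes it below -/
import Mathlib

section
/- The maximal number of 3-term arithmetic progressions in an n-element set of real numbers is ⌈n²/2⌉; that is, for every positive integer n, μ_n(ℝ) = ⌈n²/2⌉, where ℝ carries the usual metric d(x,y) = |x − y|. -/
/-!
In ℝ, as in any strictly convex space, `(a, b, c)` is a progression iff `b` is the midpoint of
`a` and `c`, i.e. `a + c = b + b`; the count then works in any linearly ordered cancellative monoid.
For a fixed middle term `b`, the pairs `(a, c)` with `a < b` inject both into the elements of `A`
below `b` (via `a`) and into those above `b` (via `c`), and swapping `a` and `c` accounts for the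
pairs with `a > b`; so `b` is the middle of at most `1 + 2 min(L, R)` progressions, where `L` and
`R = n - 1 - L` count the elements below and above `b`. As `L` runs over the ranks `0, …, n - 1`,
these bounds add up to `⌈n²/2⌉`, and `{0, …, n - 1}` attains every one of them.
-/

def IsAP3 {M : Type*} [MetricSpace M] (a b c : M) : Prop :=
  dist a b = dist b c ∧ dist b c = dist a c / 2

def AT {M : Type*} [MetricSpace M] (A : Set M) : Set (M × M × M) :=
  {p | p.1 ∈ A ∧ p.2.1 ∈ A ∧ p.2.2 ∈ A ∧ IsAP3 p.1 p.2.1 p.2.2}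

open Finset

section StrictConvex

variable {V P : Type*} [NormedAddCommGroup V] [NormedSpace ℝ V] [StrictConvexSpace ℝ V]
  [MetricSpace P] [NormedAddTorsor V P]

theorem isAP3_iff_eq_midpoint {a b c : P} : IsAP3 a b c ↔ b = midpoint ℝ a c := by
  refine ⟨fun ⟨hab, hbc⟩ => eq_midpoint_of_dist_eq_half (hab.trans hbc) hbc, ?_⟩
  rintro rfl
  simp [IsAP3, dist_left_midpoint, dist_midpoint_right, div_eq_inv_mul]

end StrictConvex

theorem Real.isAP3_iff_add_eq_add_self {a b c : ℝ} : IsAP3 a b c ↔ a + c = b + b := by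
  rw [isAP3_iff_eq_midpoint, midpoint_eq_smul_add, smul_eq_mul]
  constructor <;> intro h <;> norm_num at h ⊢ <;> linarith

section AddCommMonoid

variable {G H : Type*} [AddCommMonoid G] [DecidableEq G] [AddCommMonoid H] [DecidableEq H]

def apTriples (A : Finset G) : Finset (G × G × G) :=
  {p ∈ A ×ˢ A ×ˢ A | p.1 + p.2.2 = p.2.1 + p.2.1}

def pairsWithMidpoint (A : Finset G) (b : G) : Finset (G × G) :=
  {q ∈ A ×ˢ A | q.1 + q.2 = b + b}

theorem mem_pairsWithMidpoint {A : Finset G} {b : G} {q : G × G} :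
    q ∈ pairsWithMidpoint A b ↔ (q.1 ∈ A ∧ q.2 ∈ A) ∧ q.1 + q.2 = b + b := by
  simp [pairsWithMidpoint]

theorem swap_mem_pairsWithMidpoint {A : Finset G} {b : G} {q : G × G} :
    q.swap ∈ pairsWithMidpoint A b ↔ q ∈ pairsWithMidpoint A b := by
  simp [mem_pairsWithMidpoint, and_comm, add_comm]

theorem card_apTriples_eq_sum (A : Finset G) :
    #(apTriples A) = ∑ b ∈ A, #(pairsWithMidpoint A b) := by
  rw [card_eq_sum_card_fiberwise (f := fun p => p.2.1) (t := A)]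
  · refine sum_congr rfl fun b _ => ?_
    refine card_nbij' (fun p => (p.1, p.2.2)) (fun q => (q.1, b, q.2)) ?_ ?_ ?_ ?_
    · rintro ⟨a, b', c⟩
      simp +contextual [apTriples, pairsWithMidpoint]
    · rintro ⟨a, c⟩ hq
      simp_all [apTriples, pairsWithMidpoint]
    · rintro ⟨a, b', c⟩
      simp +contextual [apTriples]
    · rintro ⟨a, c⟩ _
      rfl
  · intro p hp
    simp only [apTriples, mem_coe, mem_filter, mem_product] at hp
    exact hp.1.2.1

theorem card_apTriples_image {f : G →+ H} (hf : Function.Injective f) (A : Finset G) :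
    #(apTriples (A.image f)) = #(apTriples A) := by
  symm
  refine card_nbij (fun p => (f p.1, f p.2.1, f p.2.2)) ?_ ?_ ?_
  · rintro ⟨a, b, c⟩ hp
    simp only [apTriples, mem_coe, mem_filter, mem_product] at hp ⊢
    obtain ⟨⟨ha, hb, hc⟩, h⟩ := hp
    exact ⟨⟨mem_image_of_mem f ha, mem_image_of_mem f hb, mem_image_of_mem f hc⟩,
      by rw [← map_add, h, map_add]⟩
  · rintro ⟨a, b, c⟩ - ⟨a', b', c'⟩ - h
    simp_all [hf.eq_iff]
  · rintro ⟨x, y, z⟩ hp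
    simp only [apTriples, mem_coe, mem_filter, mem_product, mem_image] at hp
    obtain ⟨⟨⟨a, ha, rfl⟩, ⟨b, hb, rfl⟩, ⟨c, hc, rfl⟩⟩, h⟩ := hp
    rw [← map_add, ← map_add, hf.eq_iff] at h
    exact ⟨(a, b, c), by simp [apTriples, ha, hb, hc, h], rfl⟩

end AddCommMonoid

theorem AT_coe_eq_apTriples (A : Finset ℝ) : AT (A : Set ℝ) = apTriples A := by
  ext ⟨a, b, c⟩
  simp [AT, apTriples, Real.isAP3_iff_add_eq_add_self, and_assoc]

section LinearOrder

variable {G : Type*} [AddCommMonoid G] [LinearOrder G] [IsOrderedCancelAddMonoid G]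

theorem lt_iff_lt_of_add_eq_add_self {a b c : G} (h : a + c = b + b) : a < b ↔ b < c := by
  constructor <;> intro hlt <;> by_contra! hle
  · exact (add_lt_add_of_lt_of_le hlt hle).ne h
  · exact (add_lt_add_of_le_of_lt hle hlt).ne' h

theorem card_pairsWithMidpoint_filter_fst_lt_le (A : Finset G) (b : G) :
    #{q ∈ pairsWithMidpoint A b | q.1 < b} ≤ min #{a ∈ A | a < b} #{a ∈ A | b < a} := by
  refine le_min ?_ ?_
  · refine card_le_card_of_injOn Prod.fst (fun q hq => ?_) fun q hq q' hq' h => ?_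
    · simp only [mem_coe, mem_filter, mem_pairsWithMidpoint] at hq ⊢
      exact ⟨hq.1.1.1, hq.2⟩
    · simp only [mem_coe, mem_filter, mem_pairsWithMidpoint] at hq hq'
      exact Prod.ext h (add_left_cancel (h ▸ hq.1.2.trans hq'.1.2.symm))
  · refine card_le_card_of_injOn Prod.snd (fun q hq => ?_) fun q hq q' hq' h => ?_
    · simp only [mem_coe, mem_filter, mem_pairsWithMidpoint] at hq ⊢
      exact ⟨hq.1.1.2, (lt_iff_lt_of_add_eq_add_self hq.1.2).1 hq.2⟩
    · simp only [mem_coe, mem_filter, mem_pairsWithMidpoint] at hq hq'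
      exact Prod.ext (add_right_cancel (h ▸ hq.1.2.trans hq'.1.2.symm)) h

theorem card_pairsWithMidpoint_filter_lt_fst (A : Finset G) (b : G) :
    #{q ∈ pairsWithMidpoint A b | b < q.1} = #{q ∈ pairsWithMidpoint A b | q.1 < b} := by
  refine card_nbij' Prod.swap Prod.swap (fun q hq => ?_) (fun q hq => ?_) (fun _ _ => rfl)
    fun _ _ => rfl <;> simp only [mem_coe, mem_filter, Prod.fst_swap] at hq ⊢
  · have hq' := swap_mem_pairsWithMidpoint.2 hq.1
    exact ⟨hq', (lt_iff_lt_of_add_eq_add_self (mem_pairsWithMidpoint.1 hq').2).2 hq.2⟩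
  · exact ⟨swap_mem_pairsWithMidpoint.2 hq.1,
      (lt_iff_lt_of_add_eq_add_self (mem_pairsWithMidpoint.1 hq.1).2).1 hq.2⟩

theorem card_pairsWithMidpoint_filter_fst_eq_le_one (A : Finset G) (b : G) :
    #{q ∈ pairsWithMidpoint A b | q.1 = b} ≤ 1 := by
  refine card_le_one.2 fun q hq q' hq' => ?_
  simp only [mem_filter, mem_pairsWithMidpoint] at hq hq'
  obtain ⟨⟨-, hsum⟩, hfst⟩ := hq
  obtain ⟨⟨-, hsum'⟩, hfst'⟩ := hq'
  rw [hfst] at hsum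
  rw [hfst'] at hsum'
  exact Prod.ext (hfst.trans hfst'.symm) (add_left_cancel (hsum.trans hsum'.symm))

theorem card_pairsWithMidpoint_le (A : Finset G) (b : G) :
    #(pairsWithMidpoint A b) ≤ 1 + 2 * min #{a ∈ A | a < b} #{a ∈ A | b < a} := by
  have below := card_pairsWithMidpoint_filter_fst_lt_le A b
  have above := card_pairsWithMidpoint_filter_lt_fst A b
  have at_b := card_pairsWithMidpoint_filter_fst_eq_le_one A b
  set P := pairsWithMidpoint A b
  have cover : P ⊆ {q ∈ P | q.1 < b} ∪ {q ∈ P | q.1 = b} ∪ {q ∈ P | b < q.1} := by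
    intro q hq
    simp only [mem_union, mem_filter, hq, true_and]
    exact or_assoc.2 (lt_trichotomy q.1 b)
  calc #P ≤ #{q ∈ P | q.1 < b} + #{q ∈ P | q.1 = b} + #{q ∈ P | b < q.1} :=
        (card_le_card cover).trans <| (card_union_le _ _).trans <|
          Nat.add_le_add_right (card_union_le _ _) _
    _ ≤ 1 + 2 * min #{a ∈ A | a < b} #{a ∈ A | b < a} := by omega

end LinearOrder

section Rank

variable {α : Type*} [LinearOrder α]

theorem card_filter_orderEmbOfFin (A : Finset α) (p : α → Prop) [DecidablePred p] :
    #{a ∈ A | p a} = #{i : Fin #A | p (A.orderEmbOfFin rfl i)} := by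
  symm
  refine card_nbij (A.orderEmbOfFin rfl) (fun i hi => ?_)
    (A.orderEmbOfFin rfl).injective.injOn fun a ha => ?_
  · simp only [mem_coe, mem_filter, mem_univ, true_and] at hi ⊢
    exact ⟨orderEmbOfFin_mem A rfl i, hi⟩
  · simp only [mem_coe, mem_filter] at ha
    obtain ⟨i, rfl⟩ : a ∈ Set.range (A.orderEmbOfFin rfl) := by
      rw [range_orderEmbOfFin]; exact ha.1
    exact ⟨i, by simpa using ha.2, rfl⟩

theorem sum_card_filter_lt_card_filter_gt {M : Type*} [AddCommMonoid M] (A : Finset α)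
    (f : ℕ → ℕ → M) :
    ∑ b ∈ A, f #{a ∈ A | a < b} #{a ∈ A | b < a} = ∑ i ∈ range #A, f i (#A - 1 - i) := by
  rw [← Fin.sum_univ_eq_sum_range (fun i => f i (#A - 1 - i))]
  symm
  refine sum_bij (fun i _ => A.orderEmbOfFin rfl i) (fun i _ => orderEmbOfFin_mem A rfl i)
    (fun i _ j _ h => (A.orderEmbOfFin rfl).injective h) (fun b hb => ?_) fun i _ => ?_
  · obtain ⟨i, rfl⟩ : b ∈ Set.range (A.orderEmbOfFin rfl) := by
      rw [range_orderEmbOfFin]; exact hb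
    exact ⟨i, mem_univ i, rfl⟩
  · simp only [card_filter_orderEmbOfFin, OrderEmbedding.lt_iff_lt, filter_gt_eq_Iio,
      filter_lt_eq_Ioi, Fin.card_Iio, Fin.card_Ioi]

end Rank

theorem sum_range_one_add_two_mul_min (n : ℕ) :
    ∑ i ∈ range n, (1 + 2 * min i (n - 1 - i)) = (n ^ 2 + 1) / 2 :=
  match n with
  | 0 => rfl
  | 1 => rfl
  | n + 2 => by
    have inner : ∀ i ∈ range n,
        1 + 2 * min (i + 1) (n + 2 - 1 - (i + 1)) = 2 + (1 + 2 * min i (n - 1 - i)) := by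
      intro i hi
      rw [mem_range] at hi
      omega
    rw [sum_range_succ', sum_range_succ, sum_congr rfl inner, sum_add_distrib,
      sum_range_one_add_two_mul_min n, sum_const, card_range, smul_eq_mul,
      show (n + 2) ^ 2 = n ^ 2 + 4 * n + 4 by ring]
    omega

theorem card_apTriples_le {G : Type*} [AddCommMonoid G] [LinearOrder G]
    [IsOrderedCancelAddMonoid G] (A : Finset G) : #(apTriples A) ≤ (#A ^ 2 + 1) / 2 :=
  calc #(apTriples A) = ∑ b ∈ A, #(pairsWithMidpoint A b) := card_apTriples_eq_sum A
    _ ≤ ∑ b ∈ A, (1 + 2 * min #{a ∈ A | a < b} #{a ∈ A | b < a}) :=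
      sum_le_sum fun b _ => card_pairsWithMidpoint_le A b
    _ = ∑ i ∈ range #A, (1 + 2 * min i (#A - 1 - i)) :=
      sum_card_filter_lt_card_filter_gt A fun l r => 1 + 2 * min l r
    _ = (#A ^ 2 + 1) / 2 := sum_range_one_add_two_mul_min #A

theorem card_pairsWithMidpoint_range {n j : ℕ} (hj : j < n) :
    #(pairsWithMidpoint (range n) j) = 1 + 2 * min j (n - 1 - j) := by
  rw [← show #(Icc (j + j + 1 - n) (min (j + j) (n - 1))) = 1 + 2 * min j (n - 1 - j) by
    rw [Nat.card_Icc]; omega]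
  refine card_nbij' Prod.fst (fun a => (a, j + j - a)) (fun q hq => ?_) (fun a ha => ?_)
    (fun q hq => ?_) fun a _ => rfl
  · simp only [mem_coe, mem_pairsWithMidpoint, mem_range, mem_Icc] at hq ⊢
    omega
  · simp only [mem_coe, mem_pairsWithMidpoint, mem_range, mem_Icc] at ha ⊢
    omega
  · simp only [mem_coe, mem_pairsWithMidpoint, mem_range] at hq
    exact Prod.ext rfl (by dsimp only; omega)

theorem card_apTriples_range (n : ℕ) : #(apTriples (range n)) = (n ^ 2 + 1) / 2 := by
  rw [card_apTriples_eq_sum, ← sum_range_one_add_two_mul_min]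
  exact sum_congr rfl fun j hj => card_pairsWithMidpoint_range (mem_range.1 hj)

theorem max_AP3_real_general (n : ℕ) :
    IsGreatest {k : ℕ | ∃ A : Set ℝ, A.Finite ∧ A.ncard = n ∧ (AT A).ncard = k}
      ((n ^ 2 + 1) / 2) := by
  refine ⟨⟨(range n).image (Nat.castAddMonoidHom ℝ), finite_toSet _, ?_, ?_⟩, ?_⟩
  · rw [Set.ncard_coe_finset]
    exact (card_image_of_injective _ Nat.cast_injective).trans (card_range n)
  · rw [AT_coe_eq_apTriples, Set.ncard_coe_finset, card_apTriples_image Nat.cast_injective,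
      card_apTriples_range]
  · rintro k ⟨A, hA, rfl, rfl⟩
    lift A to Finset ℝ using hA
    rw [AT_coe_eq_apTriples, Set.ncard_coe_finset, Set.ncard_coe_finset]
    exact card_apTriples_le A

/-- The maximal number of 3-term arithmetic progressions in an `n`-element
set of real numbers is `⌈n²/2⌉`. -/
theorem max_AP3_real (n : ℕ) (hn : 0 < n) :
    IsGreatest {k : ℕ | ∃ A : Set ℝ, A.Finite ∧ A.ncard = n ∧ (AT A).ncard = k}
      ((n ^ 2 + 1) / 2) :=
  max_AP3_real_general n
end

section
/- Let M be a metric space such that for any two points a, c ∈ M there is at most one point b ∈ M with d(a,b) = d(b,c) = (1/2)·d(a,c). Then for every positive integer n and every n-element subset A ⊆ M, |AT_M(A)| ≤ n² − 2n + 2. -/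
/-!
Send a progression `(a, b, c)` to its pair of endpoints `(a, c)`; by uniqueness of midpoints
this is injective on `AT(A)`, so `|AT(A)| ≤ n²` minus the number of ordered pairs of `A` with
no midpoint in `A`. These pairs are the edges of a graph on `A`, which is connected: a pair
`x ≠ y` that is not an edge has a midpoint `b ∈ A`, and `(x, b)`, `(b, y)` are strictly shorter,
so induction on distance links `x` to `y`. A connected graph on `n` vertices has at least
`n - 1` edges, i.e. `2(n - 1)` ordered pairs, whence `|AT(A)| ≤ n² - 2(n - 1)`.
-/

namespace SimpleGraph

variable {V : Type*} (G : SimpleGraph V)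

theorem preconnected_of_exists_closer [Finite V] {β : Type*} [LinearOrder β] (d : V → V → β)
    (h : ∀ x y, x ≠ y → ¬ G.Adj x y → ∃ z, d x z < d x y ∧ d z y < d x y) :
    G.Preconnected := by
  by_contra hG
  obtain ⟨u, v, huv⟩ : ∃ u v, ¬ G.Reachable u v := by simpa [Preconnected] using hG
  obtain ⟨⟨x, y⟩, hxy, hmin⟩ := Set.exists_min_image {p : V × V | ¬ G.Reachable p.1 p.2}
    (fun p => d p.1 p.2) (Set.toFinite _) ⟨(u, v), huv⟩
  have reach_of_lt : ∀ p q, d p q < d x y → G.Reachable p q := fun p q hpq =>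
    by_contra fun hnot => (hmin (p, q) hnot).not_gt hpq
  have hne : x ≠ y := by
    rintro rfl
    exact hxy (Reachable.refl x)
  obtain ⟨z, hxz, hzy⟩ := h x y hne fun hadj => hxy hadj.reachable
  exact hxy ((reach_of_lt x z hxz).trans (reach_of_lt z y hzy))

theorem card_dart_eq_two_mul_card_edgeSet [Finite V] :
    Nat.card G.Dart = 2 * Nat.card G.edgeSet := by
  classical
  have := Fintype.ofFinite V
  rw [Nat.card_eq_fintype_card, dart_card_eq_twice_card_edges, Nat.card_eq_fintype_card,
    edgeFinset_card]

end SimpleGraph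

section Metric

variable {M : Type*} [MetricSpace M]

namespace IsAP3

variable {a b c : M}

theorem symm (h : IsAP3 a b c) : IsAP3 c b a := by
  obtain ⟨hab, hbc⟩ := h
  rw [IsAP3, dist_comm c b, dist_comm b a, dist_comm c a]
  exact ⟨hab.symm, hab.trans hbc⟩

theorem dist_left_lt (h : IsAP3 a b c) (hac : a ≠ c) : dist a b < dist a c := by
  have := dist_pos.2 hac
  linarith [h.1, h.2]

theorem dist_right_lt (h : IsAP3 a b c) (hac : a ≠ c) : dist b c < dist a c := by
  have := dist_pos.2 hac
  linarith [h.2]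

end IsAP3

def midpointFreeGraph (A : Set M) : SimpleGraph A where
  Adj x y := x ≠ y ∧ ∀ b ∈ A, ¬ IsAP3 (x : M) b y
  symm := ⟨fun _ _ h => ⟨h.1.symm, fun b hb hap => h.2 b hb hap.symm⟩⟩
  loopless := ⟨fun _ h => h.1 rfl⟩

@[simp]
theorem midpointFreeGraph_adj {A : Set M} {x y : A} :
    (midpointFreeGraph A).Adj x y ↔ x ≠ y ∧ ∀ b ∈ A, ¬ IsAP3 (x : M) b y :=
  Iff.rfl

theorem midpointFreeGraph_preconnected (A : Set M) [Finite A] :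
    (midpointFreeGraph A).Preconnected := by
  refine (midpointFreeGraph A).preconnected_of_exists_closer (fun x y => dist (x : M) y) ?_
  intro x y hne hnadj
  obtain ⟨b, hb, hap⟩ : ∃ b ∈ A, IsAP3 (x : M) b y := by
    simpa [hne] using hnadj
  have hxy : (x : M) ≠ y := Subtype.coe_ne_coe.2 hne
  exact ⟨⟨b, hb⟩, hap.dist_left_lt hxy, hap.dist_right_lt hxy⟩

theorem ncard_AT_add_card_dart_le
    (hM : ∀ a c b₁ b₂ : M, IsAP3 a b₁ c → IsAP3 a b₂ c → b₁ = b₂)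
    {A : Set M} (hA : A.Finite) :
    (AT A).ncard + Nat.card (midpointFreeGraph A).Dart ≤ A.ncard ^ 2 := by
  set endpoints : M × M × M → M × M := fun p => (p.1, p.2.2)
  set dartPair : (midpointFreeGraph A).Dart → M × M := fun d => (d.fst, d.snd)
  have hinj : Set.InjOn endpoints (AT A) := by
    rintro ⟨a, b, c⟩ ⟨-, -, -, h⟩ ⟨a', b', c'⟩ ⟨-, -, -, h'⟩ heq
    obtain ⟨rfl, rfl⟩ := Prod.mk.inj heq
    rw [hM a c b b' h h']
  have hdart : Function.Injective dartPair := fun d d' heq =>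
    SimpleGraph.Dart.ext _ _
      (Prod.ext (Subtype.ext (Prod.mk.inj heq).1) (Subtype.ext (Prod.mk.inj heq).2))
  have hdisj : Disjoint (endpoints '' AT A) (Set.range dartPair) := by
    refine Set.disjoint_left.2 ?_
    rintro _ ⟨⟨a, b, c⟩, ⟨-, hb, -, hap⟩, rfl⟩ ⟨d, hd⟩
    obtain ⟨ha, hc⟩ := Prod.mk.inj hd
    exact (midpointFreeGraph_adj.1 d.adj).2 b hb (ha ▸ hc ▸ hap)
  have hsub : endpoints '' AT A ∪ Set.range dartPair ⊆ A ×ˢ A := by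
    rintro _ (⟨p, ⟨ha, -, hc, -⟩, rfl⟩ | ⟨d, rfl⟩)
    · exact ⟨ha, hc⟩
    · exact ⟨d.fst.2, d.snd.2⟩
  have hfin := (hA.prod hA).subset hsub
  calc (AT A).ncard + Nat.card (midpointFreeGraph A).Dart
      = (endpoints '' AT A).ncard + (Set.range dartPair).ncard := by
        rw [hinj.ncard_image, Set.ncard_range_of_injective hdart]
    _ = (endpoints '' AT A ∪ Set.range dartPair).ncard :=
        (Set.ncard_union_eq hdisj (hfin.subset Set.subset_union_left)
          (hfin.subset Set.subset_union_right)).symm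
    _ ≤ (A ×ˢ A).ncard := Set.ncard_le_ncard hsub (hA.prod hA)
    _ = A.ncard ^ 2 := by rw [Set.ncard_prod, sq]

end Metric

/-- If in `M` any two points `a, c` admit at most one midpoint `b` with
`d(a,b) = d(b,c) = (1/2)·d(a,c)`, then every `n`-element subset `A ⊆ M`
satisfies `|AT_M(A)| ≤ n² − 2n + 2`. -/
theorem AT_le_of_unique_midpoint {M : Type*} [MetricSpace M]
    (hM : ∀ a c b₁ b₂ : M, IsAP3 a b₁ c → IsAP3 a b₂ c → b₁ = b₂)
    (n : ℕ) (hn : 0 < n) (A : Set M) (hA : A.Finite) (hcard : A.ncard = n) :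
    (AT A).ncard ≤ n ^ 2 + 2 - 2 * n := by
  have : Finite A := hA.to_subtype
  have : Nonempty A := (Set.nonempty_of_ncard_ne_zero (hcard ▸ hn.ne')).to_subtype
  have hconn : (midpointFreeGraph A).Connected := ⟨midpointFreeGraph_preconnected A⟩
  have hedges := hconn.card_vert_le_card_edgeSet_add_one
  have hcount := ncard_AT_add_card_dart_le hM hA
  rw [Nat.card_coe_set_eq, hcard] at hedges
  rw [SimpleGraph.card_dart_eq_two_mul_card_edgeSet, hcard] at hcount
  generalize n ^ 2 = k at hcount ⊢
  omega
end

section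
/- Let M be a metric space and ℒ a family of subsets of M ('lines') such that: (i) each L ∈ ℒ is isometric to a subset of the real line, i.e., there exists f : L → ℝ with |f(x) − f(y)| = d(x,y) for all x,y ∈ L; (ii) for any two distinct points of M there is a unique L ∈ ℒ containing them both; (iii) for every nonconstant 3-term arithmetic progression (a,b,c) in M, the points a, b, c lie on a common line in ℒ. Then for every positive integer n and every n-element subset A ⊆ M, |AT_M(A)| ≤ ⌈n²/2⌉. -/
open Finset

lemma sum_sub_one_sq_le_of_sum_mul_self_sub_le {ι : Type*} (s : Finset ι) (k : ι → ℕ) (n : ℕ)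
    (h : ∑ i ∈ s, (k i * k i - k i) ≤ n * n - n) :
    ∑ i ∈ s, (k i - 1) ^ 2 ≤ (n - 1) ^ 2 := by
  -- with `x = k - 1` the hypothesis reads `∑ x² + ∑ x ≤ (n - 1)² + (n - 1)`, and `∑ x² ≤ (∑ x)²`
  have hmul_self_sub : ∀ m : ℕ, m * m - m = (m - 1) ^ 2 + (m - 1) := by
    rintro (_ | m) <;> simp [Nat.succ_mul, sq, Nat.mul_succ]
  simp only [hmul_self_sub, sum_add_distrib] at h
  have hsq := sum_sq_le_sq_sum_of_nonneg (s := s) (f := fun i => k i - 1) fun _ _ => Nat.zero_le _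
  rcases le_total (∑ i ∈ s, (k i - 1)) (n - 1) with hle | hle
  · exact hsq.trans (Nat.pow_le_pow_left hle 2)
  · omega

section LinearOrderedField

variable {𝕜 : Type*} [Field 𝕜] [LinearOrder 𝕜]

def midpointPairs (B : Finset 𝕜) : Finset (𝕜 × 𝕜) :=
  {p ∈ B ×ˢ B | p.1 < p.2 ∧ (p.1 + p.2) / 2 ∈ B}

lemma mem_midpointPairs {B : Finset 𝕜} {a c : 𝕜} :
    (a, c) ∈ midpointPairs B ↔ a ∈ B ∧ c ∈ B ∧ a < c ∧ (a + c) / 2 ∈ B := by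
  simp [midpointPairs, and_assoc]

lemma card_filter_offDiag_le_two_mul_card_midpointPairs (B : Finset 𝕜) :
    #{p ∈ B.offDiag | (p.1 + p.2) / 2 ∈ B} ≤ 2 * #(midpointPairs B) := by
  have hsub : {p ∈ B.offDiag | (p.1 + p.2) / 2 ∈ B} ⊆
      midpointPairs B ∪ (midpointPairs B).image Prod.swap := by
    rintro ⟨a, c⟩ hp
    obtain ⟨⟨ha, hc, hac⟩, hb⟩ := by simpa using hp
    rcases lt_or_gt_of_ne hac with hlt | hgt
    · exact mem_union_left _ (mem_midpointPairs.2 ⟨ha, hc, hlt, hb⟩)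
    · refine mem_union_right _ (mem_image.2 ⟨(c, a), mem_midpointPairs.2 ⟨hc, ha, hgt, ?_⟩, rfl⟩)
      rwa [add_comm]
  calc _ ≤ _ := card_le_card hsub
    _ ≤ _ := card_union_le _ _
    _ ≤ _ := by have := card_image_le (s := midpointPairs B) (f := Prod.swap); omega

variable [IsStrictOrderedRing 𝕜]

lemma midpointPairs_eq_empty_of_card_le_two {B : Finset 𝕜} (hB : #B ≤ 2) :
    midpointPairs B = ∅ := by
  refine eq_empty_of_forall_notMem fun ⟨a, c⟩ hp => ?_
  obtain ⟨ha, hc, hac, hb⟩ := mem_midpointPairs.1 hp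
  have : 2 < #B := two_lt_card_iff.2
    ⟨a, (a + c) / 2, c, ha, hb, hc, by linarith, hac.ne, by linarith⟩
  omega

lemma eq_add_div_two_of_abs_sub {x y z : 𝕜} (h₁ : |x - y| = |x - z| / 2)
    (h₂ : |y - z| = |x - z| / 2) : y = (x + z) / 2 := by
  rcases abs_cases (x - y) with ⟨e₁, -⟩ | ⟨e₁, -⟩ <;>
  rcases abs_cases (y - z) with ⟨e₂, -⟩ | ⟨e₂, -⟩ <;>
  rcases abs_cases (x - z) with ⟨e₃, -⟩ | ⟨e₃, -⟩ <;>
  linarith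

lemma eq_of_add_eq_of_extreme {m M a c a' c' : 𝕜} (hm : m ≤ a) (hm' : m ≤ a')
    (hM : c ≤ M) (hM' : c' ≤ M) (h : a = m ∨ c = M) (h' : a' = m ∨ c' = M)
    (hsum : a + c = a' + c') : a = a' ∧ c = c' := by
  rcases h with rfl | rfl <;> rcases h' with rfl | rfl <;> constructor <;> linarith

lemma card_midpointPairs_le_of_bounds {B : Finset 𝕜} {m M : 𝕜} (hm : ∀ x ∈ B, m ≤ x)
    (hM : ∀ x ∈ B, x ≤ M) :
    #(midpointPairs B) ≤ #(midpointPairs ((B.erase m).erase M)) + #((B.erase m).erase M) := by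
  set B' := (B.erase m).erase M
  have hinner : ∀ x ∈ B, m < x → x < M → x ∈ B' := fun x hx hmx hxM =>
    mem_erase.2 ⟨hxM.ne, mem_erase.2 ⟨hmx.ne', hx⟩⟩
  have hmid : ∀ a ∈ B, ∀ c ∈ B, a < c → (a + c) / 2 ∈ B → (a + c) / 2 ∈ B' :=
    fun a ha c hc hac hb => hinner _ hb (by linarith [hm a ha]) (by linarith [hM c hc])
  set T := {p ∈ midpointPairs B | p.1 = m ∨ p.2 = M}
  have hsplit : midpointPairs B ⊆ midpointPairs B' ∪ T := by
    rintro ⟨a, c⟩ hp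
    by_cases hext : a = m ∨ c = M
    · exact mem_union_right _ (mem_filter.2 ⟨hp, hext⟩)
    rw [not_or] at hext
    obtain ⟨ha, hc, hac, hb⟩ := mem_midpointPairs.1 hp
    exact mem_union_left _ (mem_midpointPairs.2
      ⟨hinner a ha ((hm a ha).lt_of_ne' hext.1) (hac.trans_le (hM c hc)),
        hinner c hc ((hm a ha).trans_lt hac) ((hM c hc).lt_of_ne hext.2), hac,
        hmid a ha c hc hac hb⟩)
  have hT : #T ≤ #B' := by
    refine card_le_card_of_injOn (fun p => (p.1 + p.2) / 2) ?_ ?_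
    · rintro ⟨a, c⟩ hp
      obtain ⟨ha, hc, hac, hb⟩ := mem_midpointPairs.1 (mem_filter.1 hp).1
      exact hmid a ha c hc hac hb
    · rintro ⟨a, c⟩ hp ⟨a', c'⟩ hp' heq
      obtain ⟨hp, hext⟩ := mem_filter.1 hp
      obtain ⟨hp', hext'⟩ := mem_filter.1 hp'
      obtain ⟨ha, hc, -⟩ := mem_midpointPairs.1 hp
      obtain ⟨ha', hc', -⟩ := mem_midpointPairs.1 hp'
      obtain ⟨rfl, rfl⟩ := eq_of_add_eq_of_extreme (hm a ha) (hm a' ha') (hM c hc) (hM c' hc')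
        hext hext' (by simpa using heq)
      rfl
  have := card_le_card hsplit
  have := card_union_le (midpointPairs B') T
  omega

lemma four_mul_card_midpointPairs_le (B : Finset 𝕜) :
    4 * #(midpointPairs B) ≤ (#B - 1) ^ 2 := by
  induction hk : #B using Nat.strong_induction_on generalizing B with
  | _ k ih =>
  rcases le_or_gt k 2 with hk2 | hk2
  · simp [midpointPairs_eq_empty_of_card_le_two (hk ▸ hk2)]
  have hne : B.Nonempty := card_pos.1 (by omega)
  have hmM : B.min' hne < B.max' hne := min'_lt_max'_of_card B (by omega)
  have hB' : #((B.erase (B.min' hne)).erase (B.max' hne)) = k - 2 := by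
    rw [card_erase_of_mem (mem_erase.2 ⟨hmM.ne', max'_mem B hne⟩),
      card_erase_of_mem (min'_mem B hne), hk]
    omega
  have hstep := card_midpointPairs_le_of_bounds (m := B.min' hne) (M := B.max' hne)
    (B.min'_le · ·) (B.le_max' · ·)
  have hrec := ih (k - 2) (by omega) _ hB'
  rw [hB'] at hstep
  obtain ⟨j, rfl⟩ : ∃ j, k = j + 3 := ⟨k - 3, by omega⟩
  rw [show j + 3 - 2 - 1 = j by omega] at hrec
  rw [show j + 3 - 1 = j + 2 by omega]
  rw [show j + 3 - 2 = j + 1 by omega] at hstep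
  nlinarith

lemma two_mul_card_filter_offDiag_le (B : Finset 𝕜) :
    2 * #{p ∈ B.offDiag | (p.1 + p.2) / 2 ∈ B} ≤ (#B - 1) ^ 2 := by
  have := card_filter_offDiag_le_two_mul_card_midpointPairs B
  have := four_mul_card_midpointPairs_le B
  omega

end LinearOrderedField

section Lines

open Classical

variable {α : Type*} {ℒ : Set (Set α)}

lemma pairwise_inter_subsingleton_of_existsUnique
    (h : ∀ x y : α, x ≠ y → ∃! L : Set α, L ∈ ℒ ∧ x ∈ L ∧ y ∈ L) :
    ℒ.Pairwise fun L L' => (L ∩ L').Subsingleton := by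
  intro L hL L' hL' hne x ⟨hxL, hxL'⟩ y ⟨hyL, hyL'⟩
  by_contra hxy
  exact hne ((h x y hxy).unique ⟨hL, hxL, hyL⟩ ⟨hL', hxL', hyL'⟩)

lemma sum_card_offDiag_filter_mem_le (hℒ : ℒ.Pairwise fun L L' => (L ∩ L').Subsingleton)
    {Ls : Finset (Set α)} (hLs : ↑Ls ⊆ ℒ) (A : Finset α) :
    ∑ L ∈ Ls, #{x ∈ A | x ∈ L}.offDiag ≤ #A.offDiag := by
  rw [← card_biUnion]
  · refine card_le_card fun p hp => ?_
    obtain ⟨L, -, hp⟩ := mem_biUnion.1 hp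
    obtain ⟨hp1, hp2, hne⟩ := mem_offDiag.1 hp
    exact mem_offDiag.2 ⟨(mem_filter.1 hp1).1, (mem_filter.1 hp2).1, hne⟩
  · intro L hL L' hL' hLL'
    refine disjoint_left.2 fun p hp hp' => ?_
    obtain ⟨hp1, hp2, hne⟩ := mem_offDiag.1 hp
    obtain ⟨hp1', hp2', -⟩ := mem_offDiag.1 hp'
    exact hne (hℒ (hLs hL) (hLs hL') hLL' ⟨(mem_filter.1 hp1).2, (mem_filter.1 hp1').2⟩
      ⟨(mem_filter.1 hp2).2, (mem_filter.1 hp2').2⟩)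

end Lines

section Metric

open Classical

variable {M : Type*} [MetricSpace M] {ℒ : Set (Set M)}

lemma IsAP3.eq_of_left_eq_right {a b : M} (h : IsAP3 a b a) : b = a := by
  simpa using h.2

lemma injOn_of_abs_sub_eq_dist {s : Set M} {f : M → ℝ}
    (hf : ∀ x ∈ s, ∀ y ∈ s, |f x - f y| = dist x y) : s.InjOn f := fun x hx y hy hxy =>
  dist_eq_zero.1 (by rw [← hf x hx y hy, hxy, sub_self, abs_zero])

lemma IsAP3.eq_add_div_two {s : Set M} {f : M → ℝ}
    (hf : ∀ x ∈ s, ∀ y ∈ s, |f x - f y| = dist x y) {a b c : M}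
    (ha : a ∈ s) (hb : b ∈ s) (hc : c ∈ s) (h : IsAP3 a b c) : f b = (f a + f c) / 2 :=
  eq_add_div_two_of_abs_sub (by rw [hf a ha b hb, hf a ha c hc, h.1, h.2])
    (by rw [hf b hb c hc, hf a ha c hc, h.2])

noncomputable def apEndpoints (A : Finset M) : Finset (M × M) :=
  {p ∈ A.offDiag | ∃ b ∈ A, IsAP3 p.1 b p.2}

lemma mem_apEndpoints {A : Finset M} {a c : M} :
    (a, c) ∈ apEndpoints A ↔ a ∈ A ∧ c ∈ A ∧ a ≠ c ∧ ∃ b ∈ A, IsAP3 a b c := by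
  simp [apEndpoints, and_assoc]

lemma ncard_AT_le_card_add_card_apEndpoints
    (hmid : ∀ a b b' c : M, a ≠ c → IsAP3 a b c → IsAP3 a b' c → b = b') (A : Finset M) :
    (AT (A : Set M)).ncard ≤ #A + #(apEndpoints A) := by
  calc (AT (A : Set M)).ncard ≤ (↑(A.diag ∪ apEndpoints A) : Set (M × M)).ncard := by
        refine Set.ncard_le_ncard_of_injOn (fun p => (p.1, p.2.2)) ?_ ?_
        · rintro ⟨a, b, c⟩ hp
          obtain ⟨ha, hb, hc, h⟩ : a ∈ A ∧ b ∈ A ∧ c ∈ A ∧ IsAP3 a b c := hp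
          by_cases hac : a = c
          · exact mem_union_left _ (mem_diag.2 ⟨ha, hac⟩)
          · exact mem_union_right _ (mem_apEndpoints.2 ⟨ha, hc, hac, b, hb, h⟩)
        · rintro ⟨a, b, c⟩ hp ⟨a', b', c'⟩ hp' heq
          obtain ⟨rfl, rfl⟩ : a = a' ∧ c = c' := by simpa using heq
          obtain ⟨-, -, -, h : IsAP3 a b c⟩ := hp
          obtain ⟨-, -, -, h' : IsAP3 a b' c⟩ := hp'
          suffices b = b' by rw [this]
          by_cases hac : a = c
          · subst hac
            rw [h.eq_of_left_eq_right, h'.eq_of_left_eq_right]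
          · exact hmid a b b' c hac h h'
    _ ≤ #A + #(apEndpoints A) := by
        rw [Set.ncard_coe_finset, ← diag_card A]
        exact card_union_le _ _

lemma two_mul_card_apEndpoints_le_of_isometric {s : Finset M} {f : M → ℝ}
    (hf : ∀ x ∈ s, ∀ y ∈ s, |f x - f y| = dist x y) :
    2 * #(apEndpoints s) ≤ (#s - 1) ^ 2 := by
  have hinj := injOn_of_abs_sub_eq_dist hf
  have hle : #(apEndpoints s) ≤ #{p ∈ (s.image f).offDiag | (p.1 + p.2) / 2 ∈ s.image f} := by
    refine card_le_card_of_injOn (Prod.map f f) ?_ ((hinj.prodMap hinj).mono ?_)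
    · rintro ⟨a, c⟩ hp
      obtain ⟨ha, hc, hac, b, hb, h⟩ := mem_apEndpoints.1 hp
      simp only [coe_filter, Prod.map, Set.mem_ofPred_eq, mem_offDiag]
      exact ⟨⟨mem_image_of_mem f ha, mem_image_of_mem f hc, fun e => hac (hinj ha hc e)⟩,
        (h.eq_add_div_two hf ha hb hc) ▸ mem_image_of_mem f hb⟩
    · rintro ⟨a, c⟩ hp
      obtain ⟨ha, hc, -⟩ := mem_apEndpoints.1 hp
      exact ⟨ha, hc⟩
  have := two_mul_card_filter_offDiag_le (s.image f)
  rw [card_image_of_injOn hinj] at this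
  omega

lemma IsAP3.middle_mem (hℒ : ℒ.Pairwise fun L L' => (L ∩ L').Subsingleton)
    (h₃ : ∀ a b c : M, IsAP3 a b c → 0 < dist a c → ∃ L ∈ ℒ, a ∈ L ∧ b ∈ L ∧ c ∈ L)
    {L : Set M} (hL : L ∈ ℒ) {a b c : M} (ha : a ∈ L) (hc : c ∈ L) (hac : a ≠ c)
    (h : IsAP3 a b c) : b ∈ L := by
  obtain ⟨L', hL', ha', hb', hc'⟩ := h₃ a b c h (dist_pos.2 hac)
  obtain rfl : L' = L := by
    by_contra hne
    exact hac (hℒ hL' hL hne ⟨ha', ha⟩ ⟨hc', hc⟩)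
  exact hb'

lemma IsAP3.middle_unique (h₁ : ∀ L ∈ ℒ, ∃ f : M → ℝ, ∀ x ∈ L, ∀ y ∈ L, |f x - f y| = dist x y)
    (hℒ : ℒ.Pairwise fun L L' => (L ∩ L').Subsingleton)
    (h₃ : ∀ a b c : M, IsAP3 a b c → 0 < dist a c → ∃ L ∈ ℒ, a ∈ L ∧ b ∈ L ∧ c ∈ L)
    {a b b' c : M} (hac : a ≠ c) (h : IsAP3 a b c) (h' : IsAP3 a b' c) : b = b' := by
  obtain ⟨L, hL, ha, hb, hc⟩ := h₃ a b c h (dist_pos.2 hac)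
  have hb' := h'.middle_mem hℒ h₃ hL ha hc hac
  obtain ⟨f, hf⟩ := h₁ L hL
  exact injOn_of_abs_sub_eq_dist hf hb hb'
    ((h.eq_add_div_two hf ha hb hc).trans (h'.eq_add_div_two hf ha hb' hc).symm)

lemma exists_card_apEndpoints_le_sum (hℒ : ℒ.Pairwise fun L L' => (L ∩ L').Subsingleton)
    (h₃ : ∀ a b c : M, IsAP3 a b c → 0 < dist a c → ∃ L ∈ ℒ, a ∈ L ∧ b ∈ L ∧ c ∈ L)
    (hex : ∀ x y : M, x ≠ y → ∃ L ∈ ℒ, x ∈ L ∧ y ∈ L) (A : Finset M) :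
    ∃ Ls : Finset (Set M), ↑Ls ⊆ ℒ ∧
      #(apEndpoints A) ≤ ∑ L ∈ Ls, #(apEndpoints {x ∈ A | x ∈ L}) := by
  choose! line hline using hex
  let lineThrough : M × M → Set M := fun p => line p.1 p.2
  refine ⟨(apEndpoints A).image lineThrough, fun L hL => ?_, ?_⟩
  · obtain ⟨⟨a, c⟩, hp, rfl⟩ := mem_image.1 hL
    exact (hline a c (mem_apEndpoints.1 hp).2.2.1).1
  rw [card_eq_sum_card_image lineThrough]
  refine sum_le_sum fun L _ => card_le_card fun ⟨a, c⟩ hfiber => ?_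
  obtain ⟨hp, rfl⟩ := mem_filter.1 hfiber
  obtain ⟨ha, hc, hac, b, hb, h⟩ := mem_apEndpoints.1 hp
  obtain ⟨hL, haL, hcL⟩ := hline a c hac
  exact mem_apEndpoints.2 ⟨mem_filter.2 ⟨ha, haL⟩, mem_filter.2 ⟨hc, hcL⟩, hac, b,
    mem_filter.2 ⟨hb, h.middle_mem hℒ h₃ hL haL hcL hac⟩, h⟩

lemma two_mul_card_apEndpoints_le
    (h₁ : ∀ L ∈ ℒ, ∃ f : M → ℝ, ∀ x ∈ L, ∀ y ∈ L, |f x - f y| = dist x y)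
    (hℒ : ℒ.Pairwise fun L L' => (L ∩ L').Subsingleton)
    (h₃ : ∀ a b c : M, IsAP3 a b c → 0 < dist a c → ∃ L ∈ ℒ, a ∈ L ∧ b ∈ L ∧ c ∈ L)
    (hex : ∀ x y : M, x ≠ y → ∃ L ∈ ℒ, x ∈ L ∧ y ∈ L) (A : Finset M) :
    2 * #(apEndpoints A) ≤ (#A - 1) ^ 2 := by
  obtain ⟨Ls, hLs, hle⟩ := exists_card_apEndpoints_le_sum hℒ h₃ hex A
  have hline : ∀ L ∈ Ls,
      2 * #(apEndpoints {x ∈ A | x ∈ L}) ≤ (#{x ∈ A | x ∈ L} - 1) ^ 2 := fun L hL => by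
    obtain ⟨f, hf⟩ := h₁ L (hLs hL)
    exact two_mul_card_apEndpoints_le_of_isometric fun x hx y hy =>
      hf x (mem_filter.1 hx).2 y (mem_filter.1 hy).2
  have hpairs := sum_card_offDiag_filter_mem_le hℒ hLs A
  simp only [offDiag_card] at hpairs
  calc 2 * #(apEndpoints A) ≤ ∑ L ∈ Ls, 2 * #(apEndpoints {x ∈ A | x ∈ L}) := by
        rw [← mul_sum]
        omega
    _ ≤ ∑ L ∈ Ls, (#{x ∈ A | x ∈ L} - 1) ^ 2 := sum_le_sum hline
    _ ≤ (#A - 1) ^ 2 := sum_sub_one_sq_le_of_sum_mul_self_sub_le _ _ _ hpairs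

end Metric

theorem AT_le_of_lines_general {M : Type*} [MetricSpace M] (ℒ : Set (Set M))
    (h₁ : ∀ L ∈ ℒ, ∃ f : M → ℝ, ∀ x ∈ L, ∀ y ∈ L, |f x - f y| = dist x y)
    (h₂ : ∀ x y : M, x ≠ y → ∃! L : Set M, L ∈ ℒ ∧ x ∈ L ∧ y ∈ L)
    (h₃ : ∀ a b c : M, IsAP3 a b c → 0 < dist a c →
      ∃ L ∈ ℒ, a ∈ L ∧ b ∈ L ∧ c ∈ L)
    (n : ℕ) (A : Set M) (hA : A.Finite) (hcard : A.ncard = n) :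
    (AT A).ncard ≤ (n ^ 2 + 1) / 2 := by
  have hℒ := pairwise_inter_subsingleton_of_existsUnique h₂
  obtain ⟨A, rfl⟩ := hA.exists_finset_coe
  rw [Set.ncard_coe_finset] at hcard
  subst hcard
  have hAT := ncard_AT_le_card_add_card_apEndpoints
    (fun _ _ _ _ hac => IsAP3.middle_unique h₁ hℒ h₃ hac) A
  have hpairs := two_mul_card_apEndpoints_le h₁ hℒ h₃ (fun x y hxy => (h₂ x y hxy).exists) A
  have harith : 2 * #A + (#A - 1) ^ 2 ≤ #A ^ 2 + 1 := by
    rcases Nat.eq_zero_or_eq_succ_pred #A with h | h <;> rw [h]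
    · simp
    · simp only [Nat.succ_sub_one]
      nlinarith
  rw [Nat.le_div_iff_mul_le two_pos]
  omega

/-- If `M` admits a family `ℒ` of 'lines' such that each line embeds isometrically into
the real line, any two distinct points lie on a unique line, and the three points of any
nonconstant 3-term arithmetic progression lie on a common line, then
`|AT_M(A)| ≤ ⌈n²/2⌉` for every `n`-element subset `A ⊆ M`. -/
theorem AT_le_of_lines {M : Type*} [MetricSpace M] (ℒ : Set (Set M))
    (h₁ : ∀ L ∈ ℒ, ∃ f : M → ℝ, ∀ x ∈ L, ∀ y ∈ L, |f x - f y| = dist x y)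
    (h₂ : ∀ x y : M, x ≠ y → ∃! L : Set M, L ∈ ℒ ∧ x ∈ L ∧ y ∈ L)
    (h₃ : ∀ a b c : M, IsAP3 a b c → 0 < dist a c →
      ∃ L ∈ ℒ, a ∈ L ∧ b ∈ L ∧ c ∈ L)
    (n : ℕ) (hn : 0 < n) (A : Set M) (hA : A.Finite) (hcard : A.ncard = n) :
    (AT A).ncard ≤ (n ^ 2 + 1) / 2 :=
  AT_le_of_lines_general ℒ h₁ h₂ h₃ n A hA hcard
end

section
/- For every positive integer n and every n-element subset A of S¹ that is evenly spread around the circle, |AT_{S¹}(A)| = 2n·⌊n/4⌋ + n. -/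
open Real

/-- A set of `n` points of the circle `S¹ = ℝ/2πℤ` is evenly spread around the circle
if it equals `{a + k·(2π/n) : k = 0, 1, …, n−1}` for some point `a`. -/
def EvenlySpread (n : ℕ) (A : Set (AddCircle (2 * π))) : Prop :=
  ∃ a : AddCircle (2 * π),
    A = {x | ∃ k : ℕ, k < n ∧ x = a + ((k * (2 * π) / n : ℝ) : AddCircle (2 * π))}

/-!
The evenly spread set is the image of `ZMod n` under `i ↦ a + i·2π/n`, and the circle distance
between the images of `i` and `j` is `(2π/n)·|i - j|`, where `|u| = min(u, n - u)` is the cyclic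
absolute value `u.valMinAbs.natAbs`. So a triple of points is an arithmetic progression exactly
when its steps `u = i - j`, `w = j - k` satisfy `|u| = |w|` and `|u + w| = 2|w|`. The first
condition means `u = ±w`; `u = -w` forces `w = 0`, and for `u = w` doubling must not wrap around,
i.e. `4|w| ≤ n`. Each of the `n` middle points `j` thus has `2⌊n/4⌋ + 1` admissible steps.
-/

theorem AT_range {M α : Type*} [MetricSpace M] (g : α → M) :
    AT (Set.range g) =
      Prod.map g (Prod.map g g) '' {p | IsAP3 (g p.1) (g p.2.1) (g p.2.2)} := by
  ext ⟨x, y, z⟩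
  simp only [AT, Set.mem_ofPred_eq, Set.mem_image, Prod.exists, Prod.map, Prod.mk.injEq]
  constructor
  · rintro ⟨⟨i, rfl⟩, ⟨j, rfl⟩, ⟨k, rfl⟩, h⟩
    exact ⟨i, j, k, h, rfl, rfl, rfl⟩
  · rintro ⟨i, j, k, h, rfl, rfl, rfl⟩
    exact ⟨⟨i, rfl⟩, ⟨j, rfl⟩, ⟨k, rfl⟩, h⟩

namespace ZMod

variable {n : ℕ} [NeZero n]

theorem natAbs_valMinAbs_add_self_eq_two_mul_iff {w : ZMod n} :
    (w + w).valMinAbs.natAbs = 2 * w.valMinAbs.natAbs ↔ 4 * w.valMinAbs.natAbs ≤ n := by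
  have hw := w.val_lt
  rw [valMinAbs_natAbs_eq_min, valMinAbs_natAbs_eq_min, val_add]
  rcases Nat.lt_or_ge (w.val + w.val) n with h | h
  · rw [Nat.mod_eq_of_lt h]; omega
  · rw [Nat.mod_eq_sub_mod h, Nat.mod_eq_of_lt (by omega)]; omega

theorem natAbs_valMinAbs_eq_and_add_eq_two_mul_iff {u w : ZMod n} :
    u.valMinAbs.natAbs = w.valMinAbs.natAbs ∧
        (u + w).valMinAbs.natAbs = 2 * w.valMinAbs.natAbs ↔
      u = w ∧ 4 * w.valMinAbs.natAbs ≤ n := by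
  rw [natAbs_valMinAbs_eq_natAbs_valMinAbs]
  constructor
  · rintro ⟨rfl | rfl, h⟩
    · exact ⟨rfl, natAbs_valMinAbs_add_self_eq_two_mul_iff.1 h⟩
    · have hw : w = 0 := by simpa [eq_comm (a := 0)] using h
      simp [hw]
  · rintro ⟨rfl, h⟩
    exact ⟨Or.inl rfl, natAbs_valMinAbs_add_self_eq_two_mul_iff.2 h⟩

theorem ncard_setOf_four_mul_natAbs_valMinAbs_le :
    {w : ZMod n | 4 * w.valMinAbs.natAbs ≤ n}.ncard = 2 * (n / 4) + 1 := by
  have himage : val '' {w : ZMod n | 4 * w.valMinAbs.natAbs ≤ n} =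
      ↑(Finset.range (n / 4 + 1) ∪ Finset.Ico (n - n / 4) n) := by
    ext v
    simp only [Set.mem_image, Set.mem_ofPred_eq, Finset.coe_union, Finset.coe_range,
      Finset.coe_Ico, Set.mem_union, Set.mem_Iio, Set.mem_Ico]
    constructor
    · rintro ⟨w, hw, rfl⟩
      have := w.val_lt
      rw [valMinAbs_natAbs_eq_min] at hw
      omega
    · intro hv
      have hvn : v < n := by have := NeZero.pos n; omega
      refine ⟨v, ?_, val_cast_of_lt hvn⟩
      rw [valMinAbs_natAbs_eq_min, val_cast_of_lt hvn]
      omega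
  have hdisj : Disjoint (Finset.range (n / 4 + 1)) (Finset.Ico (n - n / 4) n) := by
    rw [Finset.disjoint_left]
    intro v h1 h2
    simp only [Finset.mem_range, Finset.mem_Ico] at h1 h2
    omega
  rw [← Set.ncard_image_of_injective _ (val_injective n), himage, Set.ncard_coe_finset,
    Finset.card_union_of_disjoint hdisj, Finset.card_range, Nat.card_Ico]
  omega

theorem ncard_setOf_sub_eq_sub_and_four_mul_natAbs_valMinAbs_le :
    {p : ZMod n × ZMod n × ZMod n |
        p.1 - p.2.1 = p.2.1 - p.2.2 ∧ 4 * (p.2.1 - p.2.2).valMinAbs.natAbs ≤ n}.ncard =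
      n * (2 * (n / 4) + 1) := by
  have himage : {p : ZMod n × ZMod n × ZMod n |
        p.1 - p.2.1 = p.2.1 - p.2.2 ∧ 4 * (p.2.1 - p.2.2).valMinAbs.natAbs ≤ n} =
      (fun q : ZMod n × ZMod n => (q.1 + q.2, q.1, q.1 - q.2)) ''
        (Set.univ ×ˢ {w | 4 * w.valMinAbs.natAbs ≤ n}) := by
    ext ⟨x, y, z⟩
    simp only [Set.mem_ofPred_eq, Set.mem_image, Set.mem_prod, Set.mem_univ, true_and,
      Prod.exists, Prod.mk.injEq]
    constructor
    · rintro ⟨h, hw⟩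
      exact ⟨y, y - z, hw, by rw [← h]; ring, rfl, by ring⟩
    · rintro ⟨y, w, hw, rfl, rfl, rfl⟩
      exact ⟨by ring, by rwa [sub_sub_cancel]⟩
  have hinj : Function.Injective fun q : ZMod n × ZMod n => (q.1 + q.2, q.1, q.1 - q.2) := by
    rintro ⟨y, w⟩ ⟨y', w'⟩ h
    simp only [Prod.mk.injEq] at h ⊢
    obtain ⟨h1, rfl, -⟩ := h
    exact ⟨rfl, add_left_cancel h1⟩
  rw [himage, Set.ncard_image_of_injective _ hinj, Set.ncard_prod, Set.ncard_univ,
    Nat.card_zmod, ncard_setOf_four_mul_natAbs_valMinAbs_le]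

variable (p : ℝ)

noncomputable def toAddCircleOfPeriod : ZMod n →+ AddCircle p :=
  lift n ⟨AddMonoidHom.mk' (fun j : ℤ ↦ ((j * p / n : ℝ) : AddCircle p))
    (fun i j ↦ by push_cast; rw [add_mul, add_div, AddCircle.coe_add]), by
      simp [mul_div_cancel_left₀ _ (NeZero.ne (n : ℝ))]⟩

variable {p}

theorem toAddCircleOfPeriod_natCast (j : ℕ) :
    toAddCircleOfPeriod p (j : ZMod n) = ((j * p / n : ℝ) : AddCircle p) := by
  rw [← Int.cast_natCast]
  exact_mod_cast lift_coe _ _ (j : ℤ)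

theorem norm_toAddCircleOfPeriod [Fact (0 < p)] (u : ZMod n) :
    ‖toAddCircleOfPeriod p u‖ = p / n * u.valMinAbs.natAbs := by
  rw [← natCast_zmod_val u, toAddCircleOfPeriod_natCast, mul_div_right_comm,
    AddCircle.norm_div_natCast, Nat.mod_eq_of_lt u.val_lt, ← valMinAbs_natAbs_eq_min,
    natCast_zmod_val]
  ring

theorem toAddCircleOfPeriod_injective [Fact (0 < p)] :
    Function.Injective (toAddCircleOfPeriod p : ZMod n → AddCircle p) := by
  refine (injective_iff_map_eq_zero _).2 fun u hu ↦ ?_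
  have hc : 0 < p / n := div_pos (Fact.out : 0 < p) (mod_cast NeZero.pos n)
  have h := norm_toAddCircleOfPeriod (p := p) u
  rw [hu, norm_zero, eq_comm, mul_eq_zero, Nat.cast_eq_zero, Int.natAbs_eq_zero,
    valMinAbs_eq_zero] at h
  exact h.resolve_left hc.ne'

theorem range_add_toAddCircleOfPeriod (a : AddCircle p) :
    Set.range (fun i : ZMod n ↦ a + toAddCircleOfPeriod p i) =
      {x | ∃ k : ℕ, k < n ∧ x = a + ((k * p / n : ℝ) : AddCircle p)} := by
  ext x
  simp only [Set.mem_range, Set.mem_ofPred_eq]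
  constructor
  · rintro ⟨i, rfl⟩
    exact ⟨i.val, i.val_lt, by rw [← toAddCircleOfPeriod_natCast, natCast_zmod_val]⟩
  · rintro ⟨k, hk, rfl⟩
    exact ⟨k, by rw [toAddCircleOfPeriod_natCast]⟩

theorem isAP3_add_toAddCircleOfPeriod_iff [Fact (0 < p)] (a : AddCircle p) (i j k : ZMod n) :
    IsAP3 (a + toAddCircleOfPeriod p i) (a + toAddCircleOfPeriod p j)
        (a + toAddCircleOfPeriod p k) ↔
      i - j = j - k ∧ 4 * (j - k).valMinAbs.natAbs ≤ n := by
  have hc : 0 < p / n := div_pos (Fact.out : 0 < p) (mod_cast NeZero.pos n)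
  simp only [IsAP3, dist_eq_norm, add_sub_add_left_eq_sub, ← map_sub, norm_toAddCircleOfPeriod]
  rw [← natAbs_valMinAbs_eq_and_add_eq_two_mul_iff, sub_add_sub_cancel]
  apply and_congr
  · rw [mul_right_inj' hc.ne', Nat.cast_inj]
  · rw [mul_div_assoc, mul_right_inj' hc.ne', eq_div_iff two_ne_zero]
    norm_cast
    omega

end ZMod

theorem AT_evenlySpread_general (n : ℕ) (hn : 0 < n) (A : Set (AddCircle (2 * π)))
    (hspread : EvenlySpread n A) :
    (AT A).ncard = 2 * n * (n / 4) + n := by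
  have : NeZero n := ⟨hn.ne'⟩
  have : Fact (0 < 2 * π) := ⟨two_pi_pos⟩
  obtain ⟨a, rfl⟩ := hspread
  set g : ZMod n → AddCircle (2 * π) := fun i ↦ a + ZMod.toAddCircleOfPeriod (2 * π) i
  have hg : g.Injective := (add_right_injective a).comp ZMod.toAddCircleOfPeriod_injective
  rw [← ZMod.range_add_toAddCircleOfPeriod, AT_range,
    Set.ncard_image_of_injective _ (hg.prodMap (hg.prodMap hg))]
  simp only [ZMod.isAP3_add_toAddCircleOfPeriod_iff]
  rw [ZMod.ncard_setOf_sub_eq_sub_and_four_mul_natAbs_valMinAbs_le]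
  ring

/-- Any `n`-element subset of the circle which is evenly spread around the circle
has exactly `2n⌊n/4⌋ + n` 3-term arithmetic progressions. -/
theorem AT_evenlySpread (n : ℕ) (hn : 0 < n) (A : Set (AddCircle (2 * π)))
    (hA : A.Finite) (hcard : A.ncard = n) (hspread : EvenlySpread n A) :
    (AT A).ncard = 2 * n * (n / 4) + n :=
  AT_evenlySpread_general n hn A hspread
end

section
/- For every positive integer n and every n-element subset A of S¹, |AT_{S¹}(A)| ≤ n·⌊n/2⌋ + n. -/
open Real

/-!
On the circle `ℝ/Tℤ`, `(a, b, c)` is a 3-term progression iff `b = a + s` and `c = b + s` for a real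
step `s` with `|s| ≤ T/4`. Lift the `n` points of `A` to the increasing sequence `X : ℤ → ℝ` of all
their real representatives, so that `X (m + n) = X m + T`. A progression with centre `X i` and step
`s > 0` has both ends `X i ± s` among the terms, so there are at most `min (L i) (R i)` of them, where
`L i` and `R i` count the terms in `[X i - T/4, X i)` and in `(X i, X i + T/4]`; the same holds for
`s < 0`. Pair `i` with `j = i + ⌊n/2⌋`. One of the two arcs between `X i` and `X j` has length at least
`T/2` and contains `⌊n/2⌋ - 1` or `⌈n/2⌉ - 1` terms; the windows of its endpoints facing into it lie in
it and overlap at most in its midpoint (and not at all if the arc is longer than `T/2`). Hence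
`min (L i) (R i) + min (L j) (R j) ≤ ⌊n/2⌋`, and summing over `i` bounds the non-constant progressions
by `n ⌊n/2⌋`. The `n` constant progressions account for the remaining `n`.
-/

namespace AddCircle

variable {T : ℝ}

lemma coe_add_int_mul_period (y : ℝ) (q : ℤ) : ((y + q * T : ℝ) : AddCircle T) = y := by
  rw [← zsmul_eq_mul, QuotientAddGroup.mk_add, coe_zsmul, coe_period, smul_zero, add_zero]

open Set in
lemma exists_orderEmbedding_representatives (hT : 0 < T) {A : Set (AddCircle T)} (hA : A.Finite) :
    ∃ x : Fin A.ncard ↪o ℝ, (∀ r, x r ∈ Ico 0 T) ∧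
      ∀ y : ℝ, (y : AddCircle T) ∈ A → ∃ (r : Fin A.ncard) (q : ℤ), y = x r + q * T := by
  have : Fact (0 < T) := ⟨hT⟩
  set S : Set ℝ := Ico 0 T ∩ (↑) ⁻¹' A
  have hS_inj : InjOn ((↑) : ℝ → AddCircle T) S := fun y hy y' hy' h =>
    (coe_eq_coe_iff_of_mem_Ico (a := 0) (by simpa using hy.1) (by simpa using hy'.1)).mp h
  have hS_image : ((↑) : ℝ → AddCircle T) '' S = A := by
    refine Subset.antisymm (fun b ⟨y, hy, hyb⟩ => hyb ▸ hy.2) fun b hb => ?_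
    obtain ⟨y, hy, rfl⟩ := eq_coe_Ico b
    exact ⟨y, ⟨hy, hb⟩, rfl⟩
  have hS_fin : S.Finite := Finite.of_finite_image (hS_image ▸ hA) hS_inj
  have hS_card : hS_fin.toFinset.card = A.ncard := by
    rw [← ncard_eq_toFinset_card S hS_fin, ← hS_image, hS_inj.ncard_image]
  set x := hS_fin.toFinset.orderEmbOfFin hS_card
  have hx_range : range x = S := by simp [x, Finset.range_orderEmbOfFin]
  refine ⟨x, fun r => (hx_range ▸ mem_range_self r : x r ∈ S).1, fun y hy => ?_⟩
  have hyS : toIcoMod hT 0 y ∈ S := by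
    refine ⟨by simpa using toIcoMod_mem_Ico hT 0 y, ?_⟩
    rwa [mem_preimage, ← coe_add_int_mul_period _ (toIcoDiv hT 0 y), ← zsmul_eq_mul,
      toIcoMod_add_toIcoDiv_zsmul]
  obtain ⟨r, hr⟩ := hx_range.symm ▸ hyS
  exact ⟨r, toIcoDiv hT 0 y, by rw [hr, ← zsmul_eq_mul, toIcoMod_add_toIcoDiv_zsmul]⟩

lemma exists_coe_eq_and_abs_eq_norm (t : AddCircle T) :
    ∃ s : ℝ, (s : AddCircle T) = t ∧ |s| = ‖t‖ := by
  obtain ⟨x, rfl⟩ := QuotientAddGroup.mk_surjective t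
  refine ⟨x + ((-round (T⁻¹ * x) : ℤ) : ℝ) * T, coe_add_int_mul_period _ _, ?_⟩
  rw [norm_eq T, Int.cast_neg, neg_mul, ← sub_eq_add_neg]

lemma eq_or_eq_neg_of_norm_eq {u v : AddCircle T} (h : ‖u‖ = ‖v‖) : u = v ∨ u = -v := by
  obtain ⟨s, rfl, hs⟩ := exists_coe_eq_and_abs_eq_norm u
  obtain ⟨s', rfl, hs'⟩ := exists_coe_eq_and_abs_eq_norm v
  rcases abs_eq_abs.mp (hs.trans (h.trans hs'.symm)) with rfl | rfl
  · exact Or.inl rfl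
  · exact Or.inr (QuotientAddGroup.mk_neg _ _)

lemma exists_step_of_isAP3 (hT : T ≠ 0) {a b c : AddCircle T} (h : IsAP3 a b c) :
    ∃ s : ℝ, |s| ≤ |T| / 4 ∧ b = a + s ∧ c = b + s := by
  obtain ⟨hab, hac⟩ := h
  simp only [dist_eq_norm] at hab hac
  rcases eq_or_eq_neg_of_norm_eq hab with hstep | hback
  · obtain ⟨s, hs, hs_norm⟩ := exists_coe_eq_and_abs_eq_norm (c - b)
    have hca : a - c = (b - c) + (b - c) := by rw [← sub_add_sub_cancel a b c, hstep]
    -- `d(a, c) = 2 d(b, c)` says that doubling the step `b - c` does not wrap around the circle.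
    have hdouble : 2 * ‖b - c‖ ≤ |T| / 2 := by
      rw [hca] at hac
      linarith [norm_le_half_period T hT (x := (b - c) + (b - c))]
    refine ⟨s, ?_, ?_, ?_⟩
    · rw [hs_norm, ← norm_neg, neg_sub]; linarith [hdouble]
    · rw [hs, ← neg_sub b c, ← hstep]; abel
    · rw [hs]; abel
  · rw [neg_sub, sub_left_inj] at hback
    subst hback
    have hba : b = a := by simpa [sub_eq_zero] using hac
    exact ⟨0, by simp; positivity, by simp [hba], by simp [hba]⟩

end AddCircle

lemma Int.encard_Ioo_add_natCast (i : ℤ) (k : ℕ) : (Set.Ioo i (i + k)).encard = (k - 1 : ℕ) := by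
  rw [← Finset.coe_Ioo, Set.encard_coe_eq_coe_finsetCard, Int.card_Ioo]
  congr 1
  omega

open Finset in
lemma Function.Periodic.sum_range_add_natCast {M : Type*} [AddCommMonoid M] {f : ℤ → M} {n : ℕ}
    (hf : Function.Periodic f n) (k : ℕ) :
    ∑ i ∈ range n, f (i + k) = ∑ i ∈ range n, f i := by
  induction k with
  | zero => simp
  | succ k ih =>
    rw [← ih]
    cases n with
    | zero => simp
    | succ m =>
      have hwrap : f (m + (k + 1 : ℕ)) = f (0 + k) := by
        rw [zero_add, ← hf k]; push_cast; ring_nf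
      rw [sum_range_succ, sum_range_succ', hwrap, Nat.cast_zero]
      congr 1
      refine sum_congr rfl fun i _ => ?_
      push_cast
      ring_nf

open Finset in
lemma two_nsmul_sum_range_le_of_periodic {M : Type*} [AddCommMonoid M] [PartialOrder M]
    [IsOrderedAddMonoid M] {f : ℤ → M} {n k : ℕ} {c : M} (hf : Function.Periodic f n)
    (h : ∀ i, f i + f (i + k) ≤ c) :
    2 • ∑ i ∈ range n, f i ≤ n • c := by
  calc 2 • ∑ i ∈ range n, f i = ∑ i ∈ range n, (f i + f (i + k)) := by
        rw [sum_add_distrib, hf.sum_range_add_natCast, two_nsmul]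
    _ ≤ ∑ _i ∈ range n, c := sum_le_sum fun i _ => h i
    _ = n • c := by rw [sum_const, card_range]

namespace CircleAP

open Set

section ExtendPeriodic

variable {n : ℕ} [NeZero n] (x : Fin n → ℝ) (T : ℝ)

def extendPeriodic (m : ℤ) : ℝ :=
  x (Int.divModEquiv n m).2 + (Int.divModEquiv n m).1 * T

lemma extendPeriodic_mul_add (q : ℤ) (r : Fin n) :
    extendPeriodic x T (q * n + r) = x r + q * T := by
  have h : Int.divModEquiv n (q * n + r) = (q, r) := (Int.divModEquiv n).apply_symm_apply (q, r)
  simp [extendPeriodic, h]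

lemma extendPeriodic_add_period (m : ℤ) :
    extendPeriodic x T (m + n) = extendPeriodic x T m + T := by
  obtain ⟨⟨q, r⟩, rfl⟩ := (Int.divModEquiv n).symm.surjective m
  simp only [Int.divModEquiv_symm_apply]
  rw [show q * n + r + n = (q + 1) * n + r by ring, extendPeriodic_mul_add, extendPeriodic_mul_add]
  push_cast; ring

variable {x T}

lemma strictMono_extendPeriodic (hx : StrictMono x) (hxT : ∀ r, x r ∈ Ico 0 T) :
    StrictMono (extendPeriodic x T) := by
  intro m m' hmm'
  obtain ⟨⟨q, r⟩, rfl⟩ := (Int.divModEquiv n).symm.surjective m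
  obtain ⟨⟨q', r'⟩, rfl⟩ := (Int.divModEquiv n).symm.surjective m'
  simp only [Int.divModEquiv_symm_apply] at hmm' ⊢
  rw [extendPeriodic_mul_add, extendPeriodic_mul_add]
  have hr := r.isLt
  have hr' := r'.isLt
  rcases lt_trichotomy q q' with hq | rfl | hq
  · have hq1 : (q : ℝ) + 1 ≤ q' := by exact_mod_cast hq
    have hT : 0 ≤ T := (hxT r).1.trans (hxT r).2.le
    linarith [mul_le_mul_of_nonneg_right hq1 hT, (hxT r).2, (hxT r').1]
  · have hrr' : r < r' := Fin.lt_def.mpr (by omega)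
    linarith [hx hrr']
  · have hqn : q' * n + n ≤ q * n := by nlinarith
    omega

end ExtendPeriodic

lemma exists_strictMono_lift {T : ℝ} (hT : 0 < T) {A : Set (AddCircle T)} (hA : A.Finite)
    (hn : A.ncard ≠ 0) :
    ∃ X : ℤ → ℝ, StrictMono X ∧ (∀ m, X (m + A.ncard) = X m + T) ∧
      (∀ y : ℝ, (y : AddCircle T) ∈ A → y ∈ range X) ∧
      ∀ b ∈ A, ∃ i < A.ncard, (X i : AddCircle T) = b := by
  have : NeZero A.ncard := ⟨hn⟩
  obtain ⟨x, hxT, hrep⟩ := AddCircle.exists_orderEmbedding_representatives hT hA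
  refine ⟨extendPeriodic x T, strictMono_extendPeriodic x.strictMono hxT,
    extendPeriodic_add_period x T, fun y hy => ?_, fun b hb => ?_⟩
  · obtain ⟨r, q, rfl⟩ := hrep y hy
    exact ⟨q * A.ncard + r, extendPeriodic_mul_add x T q r⟩
  · obtain ⟨y, rfl⟩ := QuotientAddGroup.mk_surjective b
    obtain ⟨r, q, rfl⟩ := hrep y hb
    refine ⟨r, r.isLt, ?_⟩
    have hr : extendPeriodic x T r = x r := by simpa using extendPeriodic_mul_add x T 0 r
    rw [hr]
    exact (AddCircle.coe_add_int_mul_period _ q).symm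

variable (X : ℤ → ℝ)

def window (I : Set ℝ) (i : ℤ) : Set ℤ := {m | X m - X i ∈ I}

noncomputable def minSideCount (w : ℝ) (i : ℤ) : ℕ∞ :=
  min (window X (Ico (-w) 0) i).encard (window X (Ioc 0 w) i).encard

def apEnds (w : ℝ) (i : ℤ) : Set (ℤ × ℤ) :=
  {p | X p.1 + X p.2 = 2 * X i ∧ X p.2 - X i ∈ Icc (-w) w}

variable {X}

lemma encard_AT_le_sum_encard_apEnds {T : ℝ} (hT : T ≠ 0) {A : Set (AddCircle T)} {n : ℕ}
    (hlift : ∀ y : ℝ, (y : AddCircle T) ∈ A → y ∈ range X)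
    (hcover : ∀ b ∈ A, ∃ i < n, (X i : AddCircle T) = b) :
    (AT A).encard ≤ ∑ i ∈ Finset.range n, (apEnds X (|T| / 4) i).encard := by
  have hsub : AT A ⊆ ⋃ i ∈ Finset.range n,
      (fun p : ℤ × ℤ => ((X p.1 : AddCircle T), (X i : AddCircle T), (X p.2 : AddCircle T))) ''
        apEnds X (|T| / 4) i := by
    rintro ⟨a, b, c⟩ h
    obtain ⟨ha, hb, hc, hap⟩ : a ∈ A ∧ b ∈ A ∧ c ∈ A ∧ IsAP3 a b c := h
    obtain ⟨i, hi, rfl⟩ := hcover b hb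
    obtain ⟨s, hs, hba, rfl⟩ := AddCircle.exists_step_of_isAP3 hT hap
    rw [eq_sub_of_add_eq hba.symm] at ha
    obtain ⟨l, hl⟩ := hlift (X i - s) (by exact_mod_cast ha)
    obtain ⟨m, hm⟩ := hlift (X i + s) (by exact_mod_cast hc)
    refine mem_iUnion₂.mpr ⟨i, Finset.mem_range.mpr hi, (l, m), ⟨?_, ?_⟩, ?_⟩
    · simp only [hl, hm]; ring
    · simpa [hm, abs_le] using hs
    · simp [hl, hm, eq_sub_of_add_eq hba.symm]
  calc (AT A).encard ≤ _ := encard_le_encard hsub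
    _ ≤ _ := Finset.set_encard_biUnion_le _ _
    _ ≤ _ := Finset.sum_le_sum fun i _ => encard_image_le _ _

lemma encard_apEnds_le (hX : StrictMono X) (w : ℝ) (i : ℤ) :
    (apEnds X w i).encard ≤ 1 + 2 * minSideCount X w i := by
  -- A pair is determined by either of its ends. Those with right end beyond `i` inject into both
  -- side windows; all others are their swaps, or `(i, i)`.
  set P : Set (ℤ × ℤ) := {p | X p.1 + X p.2 = 2 * X i ∧ X p.2 - X i ∈ Ioc 0 w}
  have hsub : apEnds X w i ⊆ {(i, i)} ∪ P ∪ Prod.swap '' P := by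
    rintro ⟨l, m⟩ ⟨hsum, hm⟩
    rcases lt_trichotomy (X m) (X i) with hlt | heq | hgt
    · refine Or.inr ⟨(m, l), ⟨by simp only; linarith, ?_, ?_⟩, rfl⟩ <;>
        simp only at * <;> linarith [hm.1]
    · have hmi : m = i := hX.injective heq
      have hli : l = i := hX.injective (by linarith)
      exact Or.inl (Or.inl (by simp [hmi, hli]))
    · exact Or.inl (Or.inr ⟨hsum, by simp only; linarith, hm.2⟩)
  have hP : P.encard ≤ minSideCount X w i := by
    refine le_min (encard_le_encard_of_injOn (f := Prod.fst) ?_ ?_)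
      (encard_le_encard_of_injOn (f := Prod.snd) (fun p hp => hp.2) ?_)
    · rintro ⟨l, m⟩ ⟨hsum, hm0, hmw⟩
      exact ⟨by simp only at *; linarith, by simp only at *; linarith⟩
    · rintro ⟨l, m⟩ ⟨hsum, -⟩ ⟨l', m'⟩ ⟨hsum', -⟩ (rfl : l = l')
      simp only [Prod.mk.injEq, true_and]
      exact hX.injective (by linarith)
    · rintro ⟨l, m⟩ ⟨hsum, -⟩ ⟨l', m'⟩ ⟨hsum', -⟩ (rfl : m = m')
      simp only [Prod.mk.injEq, and_true]
      exact hX.injective (by linarith)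
  calc (apEnds X w i).encard ≤ ({(i, i)} ∪ P ∪ Prod.swap '' P).encard := encard_le_encard hsub
    _ ≤ 1 + P.encard + P.encard := by
        grw [encard_union_le, encard_union_le, encard_singleton, encard_image_le]
    _ ≤ 1 + 2 * minSideCount X w i := by rw [add_assoc, ← two_mul]; gcongr

lemma window_union_window_subset_Ioo (hX : StrictMono X) {w : ℝ} {i j : ℤ}
    (h : 2 * w ≤ X j - X i) :
    window X (Ioc 0 w) i ∪ window X (Ico (-w) 0) j ⊆ Ioo i j := by
  rintro m (⟨hm0, hmw⟩ | ⟨hmw, hm0⟩)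
  · exact ⟨hX.lt_iff_lt.mp (by linarith), hX.lt_iff_lt.mp (by linarith)⟩
  · exact ⟨hX.lt_iff_lt.mp (by linarith), hX.lt_iff_lt.mp (by linarith)⟩

lemma encard_window_add_encard_window_le (hX : StrictMono X) {w : ℝ} {i j : ℤ}
    (h : 2 * w ≤ X j - X i) :
    (window X (Ioc 0 w) i).encard + (window X (Ico (-w) 0) j).encard ≤ (Ioo i j).encard + 1 := by
  have hinter : (window X (Ioc 0 w) i ∩ window X (Ico (-w) 0) j).encard ≤ 1 := by
    refine encard_le_one_iff.mpr fun m m' ⟨⟨_, hm⟩, ⟨hm', _⟩⟩ ⟨⟨_, hm₂⟩, ⟨hm₂', _⟩⟩ => ?_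
    exact hX.injective (by linarith)
  rw [← encard_union_add_encard_inter]
  exact add_le_add (encard_le_encard (window_union_window_subset_Ioo hX h)) hinter

lemma encard_window_add_encard_window_le_of_lt (hX : StrictMono X) {w : ℝ} {i j : ℤ}
    (h : 2 * w < X j - X i) :
    (window X (Ioc 0 w) i).encard + (window X (Ico (-w) 0) j).encard ≤ (Ioo i j).encard := by
  have hdisj : Disjoint (window X (Ioc 0 w) i) (window X (Ico (-w) 0) j) :=
    disjoint_left.mpr fun m ⟨_, hm⟩ ⟨hm', _⟩ => by linarith
  rw [← encard_union_eq hdisj]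
  exact encard_le_encard (window_union_window_subset_Ioo hX h.le)

section Periodic

variable {n : ℕ} {T : ℝ} (hper : ∀ m, X (m + n) = X m + T)
include hper

lemma periodic_encard_window (I : Set ℝ) :
    Function.Periodic (fun i => (window X I i).encard) n := by
  intro i
  have hshift : window X I i = (· + (n : ℤ)) ⁻¹' window X I (i + n) := by
    ext m; simp [window, hper]
  simp only [hshift]
  exact (encard_preimage_of_bijective (Equiv.addRight (n : ℤ)).bijective _).symm

lemma periodic_minSideCount (w : ℝ) : Function.Periodic (minSideCount X w) n := fun i => by
  simp only [minSideCount, periodic_encard_window hper _ i]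

lemma minSideCount_add_minSideCount_le (hX : StrictMono X) (hT : 0 < T) (i : ℤ) :
    minSideCount X (T / 4) i + minSideCount X (T / 4) (i + (n / 2 : ℕ)) ≤ (n / 2 : ℕ) := by
  set k := n / 2
  by_cases hfar : T / 2 ≤ X (i + k) - X i
  · have hk : k ≠ 0 := by rintro hk; simp [hk] at hfar; linarith
    calc _ ≤ (window X (Ioc 0 (T / 4)) i).encard + (window X (Ico (-(T / 4)) 0) (i + k)).encard :=
          add_le_add (min_le_right _ _) (min_le_left _ _)
      _ ≤ (Ioo i (i + k)).encard + 1 := encard_window_add_encard_window_le hX (by linarith)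
      _ = k := by rw [Int.encard_Ioo_add_natCast]; norm_cast; omega
  · have hnear : T / 2 < X (i + k + (n - k : ℕ)) - X (i + k) := by
      rw [show i + k + (n - k : ℕ) = i + n by omega, hper]; linarith
    calc _ = minSideCount X (T / 4) (i + k) + minSideCount X (T / 4) (i + k + (n - k : ℕ)) := by
          rw [add_comm, show i + k + (n - k : ℕ) = i + n by omega, periodic_minSideCount hper]
      _ ≤ (window X (Ioc 0 (T / 4)) (i + k)).encard +
            (window X (Ico (-(T / 4)) 0) (i + k + (n - k : ℕ))).encard :=
          add_le_add (min_le_right _ _) (min_le_left _ _)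
      _ ≤ (Ioo (i + k) (i + k + (n - k : ℕ))).encard :=
          encard_window_add_encard_window_le_of_lt hX (by linarith)
      _ ≤ k := by rw [Int.encard_Ioo_add_natCast]; norm_cast; omega

end Periodic

end CircleAP

open CircleAP in
/-- Every `n`-element subset `A` of the circle `S¹ = ℝ/2πℤ` satisfies
`|AT_{S¹}(A)| ≤ n⌊n/2⌋ + n`. -/
theorem AT_circle_le (n : ℕ) (hn : 0 < n) (A : Set (AddCircle (2 * π)))
    (hA : A.Finite) (hcard : A.ncard = n) :
    (AT A).ncard ≤ n * (n / 2) + n := by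
  obtain ⟨X, hX, hper, hlift, hcover⟩ := exists_strictMono_lift two_pi_pos hA (hcard ▸ hn.ne')
  rw [hcard] at hper hcover
  have hquarter : |2 * π| / 4 = 2 * π / 4 := by rw [abs_of_pos two_pi_pos]
  have hpairs : 2 • ∑ i ∈ Finset.range n, minSideCount X (2 * π / 4) i ≤ n • ((n / 2 : ℕ) : ℕ∞) :=
    two_nsmul_sum_range_le_of_periodic (periodic_minSideCount hper _)
      (minSideCount_add_minSideCount_le hper hX two_pi_pos)
  have hAT : (AT A).encard ≤ (n * (n / 2) + n : ℕ) := calc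
    (AT A).encard ≤ ∑ i ∈ Finset.range n, (apEnds X (2 * π / 4) i).encard :=
        hquarter ▸ encard_AT_le_sum_encard_apEnds two_pi_pos.ne' hlift hcover
    _ ≤ ∑ i ∈ Finset.range n, (1 + 2 * minSideCount X (2 * π / 4) i) :=
        Finset.sum_le_sum fun i _ => encard_apEnds_le hX _ i
    _ = n + 2 • ∑ i ∈ Finset.range n, minSideCount X (2 * π / 4) i := by
        simp [Finset.sum_add_distrib, Finset.mul_sum]
    _ ≤ (n * (n / 2) + n : ℕ) := by
        grw [hpairs]; push_cast; rw [nsmul_eq_mul, add_comm]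
  exact ENat.toNat_le_of_le_natCast hAT
end

section
/- Let r ≥ 2 be an integer and let T_r be an r-regular tree: a connected, acyclic simple graph in which every vertex has degree exactly r, equipped with the graph metric. Then for every vertex v₀ and every natural number d₀, the closed ball A = {v : dist(v₀, v) ≤ d₀} is finite and satisfies 2r² · |AT_{T_r}(A)| = (r² + (r−2)²) · |A|² + 4(r−2) · |A| + 4. -/
/-!
Two vertices `a, c` of a tree at even distance have exactly one midpoint; it lies on the
`a`–`c` path, and the distance to `v₀` cannot rise and then fall along a path, so the midpoint
stays in every ball around `v₀` containing `a` and `c`. Hence the progressions in a ball `A`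
correspond to the pairs of `A` at even distance. A tree is bipartite with parity classes read off
from the distance to `v₀`, so `2 |AT(A)| = |A|² + σ²` with `σ = ∑_{a ∈ A} (-1)^{dist(v₀, a)}`.
The sphere of radius `k + 1` has `r (r - 1)^k` vertices, which gives
`(r - 2) |A| + 2 = r (r - 1)^{d₀}` and `σ = (-1)^{d₀} (r - 1)^{d₀}`; the identity follows.
-/

open Finset

/-- The set of 3-term arithmetic progressions, with respect to the graph metric of a
graph `G`, with all entries in the vertex set `A`. -/
def graphAT {V : Type*} (G : SimpleGraph V) (A : Set V) : Set (V × V × V) :=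
  {p | p.1 ∈ A ∧ p.2.1 ∈ A ∧ p.2.2 ∈ A ∧
    G.dist p.1 p.2.1 = G.dist p.2.1 p.2.2 ∧
    2 * G.dist p.1 p.2.1 = G.dist p.1 p.2.2}

theorem le_max_of_lt_succ_imp_lt_succ {α : Type*} [LinearOrder α] {f : ℕ → α} {L : ℕ}
    (hf : ∀ j, j + 2 ≤ L → f j < f (j + 1) → f (j + 1) < f (j + 2)) {i : ℕ} (hi : i ≤ L) :
    f i ≤ max (f 0) (f L) := by
  by_cases hrise : ∃ j < i, f j < f (j + 1)
  · obtain ⟨j, hji, hj⟩ := hrise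
    have hmono : ∀ n, j ≤ n → n < L → f n < f (n + 1) := by
      intro n hjn hnL
      induction n, hjn using Nat.le_induction with
      | base => exact hj
      | succ n _ ih => exact hf n (by omega) (ih (by omega))
    have hle : MonotoneOn f (Set.Icc j L) := monotoneOn_of_le_succ Set.ordConnected_Icc
      fun n _ hn hn' => (hmono n hn.1 (by simp at hn'; omega)).le
    exact le_max_of_le_right (hle ⟨by omega, hi⟩ ⟨by omega, le_rfl⟩ hi)
  · push Not at hrise
    have hle : AntitoneOn f (Set.Icc 0 i) := antitoneOn_of_succ_le Set.ordConnected_Icc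
      fun n _ _ hn' => hrise n (by simp at hn'; omega)
    exact le_max_of_le_left (hle ⟨le_rfl, by omega⟩ ⟨by omega, le_rfl⟩ (Nat.zero_le i))

theorem two_mul_card_filter_even_iff_even {α : Type*} (s : Finset α) (f : α → ℕ) :
    2 * (#{p ∈ s ×ˢ s | Even (f p.1) ↔ Even (f p.2)} : ℤ) =
      #s ^ 2 + (∑ x ∈ s, (-1) ^ f x) ^ 2 := by
  have key (m n : ℕ) : (if (Even m ↔ Even n) then 2 else 0 : ℤ) = 1 + (-1) ^ m * (-1) ^ n := by
    rcases Nat.even_or_odd m with hm | hm <;> rcases Nat.even_or_odd n with hn | hn <;>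
      simp [hm, hn, hm.neg_one_pow, hn.neg_one_pow, Nat.not_even_iff_odd.2]
  rw [card_filter, Nat.cast_sum, mul_sum, sq, sq, sum_mul_sum, ← sum_product', ← Nat.cast_mul,
    ← card_product, card_eq_sum_ones, Nat.cast_sum, ← sum_add_distrib]
  refine sum_congr rfl fun p _ => ?_
  rw [Nat.cast_one, ← key]
  split_ifs <;> norm_num

theorem Finset.sum_comp_eq_sum_range_ncard_smul {α M : Type*} [AddCommMonoid M] (ℓ : α → ℕ)
    {d : ℕ} (s : Finset α) (hs : ↑s = {x | ℓ x ≤ d}) (g : ℕ → M) :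
    ∑ x ∈ s, g (ℓ x) = ∑ k ∈ range (d + 1), {x | ℓ x = k}.ncard • g k := by
  classical
  have hmem (x : α) : x ∈ s ↔ ℓ x ≤ d := by rw [← mem_coe, hs, Set.mem_ofPred_eq]
  rw [← sum_fiberwise_of_maps_to' (t := range (d + 1)) (g := ℓ)
    fun x hx => mem_range.2 (Nat.lt_succ_of_le ((hmem x).1 hx))]
  refine sum_congr rfl fun k hk => ?_
  rw [sum_const, ← Set.ncard_coe_finset, coe_filter]
  congr 2
  ext x
  simp only [Set.mem_ofPred_eq, hmem, and_iff_right_iff_imp]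
  rintro rfl
  exact Nat.le_of_lt_succ (mem_range.1 hk)

theorem sub_two_mul_one_add_sum_mul_pow {R : Type*} [CommRing R] (x : R) (d : ℕ) :
    (x - 2) * (1 + ∑ k ∈ range d, x * (x - 1) ^ k) + 2 = x * (x - 1) ^ d := by
  induction d with
  | zero => simp
  | succ d ih => rw [sum_range_succ, pow_succ]; linear_combination ih

theorem one_add_sum_mul_pow_mul_neg_one_pow {R : Type*} [CommRing R] (x : R) (d : ℕ) :
    1 + ∑ k ∈ range d, x * (x - 1) ^ k * (-1) ^ (k + 1) = (-1) ^ d * (x - 1) ^ d := by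
  induction d with
  | zero => simp
  | succ d ih => rw [sum_range_succ, pow_succ, pow_succ]; linear_combination ih

namespace SimpleGraph

variable {V : Type*} {G : SimpleGraph V} {u v x y : V}

theorem Reachable.exists_dist_eq_and_dist_eq (h : G.Reachable u v) {k : ℕ}
    (hk : k ≤ G.dist u v) : ∃ w, G.dist u w = k ∧ G.dist w v = G.dist u v - k := by
  obtain ⟨p, hp⟩ := h.exists_walk_length_eq_dist
  refine ⟨p.getVert k, ?_⟩
  have h₁ : G.dist u (p.getVert k) ≤ k := (dist_le (p.take k)).trans (by simp)
  have h₂ : G.dist (p.getVert k) v ≤ G.dist u v - k := (dist_le (p.drop k)).trans (by simp [hp])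
  have h₃ := (p.take k).reachable.dist_triangle_left v
  omega

theorem exists_adj_dist_eq_of_dist_eq_add_one {k : ℕ} (h : G.dist u v = k + 1) :
    ∃ w, G.Adj w v ∧ G.dist u w = k := by
  obtain ⟨w, hw, hwv⟩ := (Reachable.of_dist_ne_zero (by omega)).exists_dist_eq_and_dist_eq
    (show k ≤ G.dist u v by omega)
  exact ⟨w, dist_eq_one_iff_adj.1 (by omega), hw⟩

theorem Connected.finite_setOf_dist_eq (hG : G.Connected)
    (hfin : ∀ v, (G.neighborSet v).Finite) (u : V) (k : ℕ) : {v | G.dist u v = k}.Finite := by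
  induction k with
  | zero => exact (Set.finite_singleton u).subset fun v hv => (hG.dist_eq_zero_iff.1 hv).symm
  | succ k ih =>
    refine (ih.biUnion fun w _ => hfin w).subset fun v hv => ?_
    obtain ⟨w, hwv, hw⟩ := exists_adj_dist_eq_of_dist_eq_add_one hv
    exact Set.mem_biUnion hw hwv

theorem Connected.finite_setOf_dist_le (hG : G.Connected)
    (hfin : ∀ v, (G.neighborSet v).Finite) (u : V) (k : ℕ) : {v | G.dist u v ≤ k}.Finite :=
  ((Set.finite_Iic k).biUnion fun j _ => hG.finite_setOf_dist_eq hfin u j).subset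
    fun _ hv => Set.mem_biUnion (Set.mem_Iic.2 hv) rfl

namespace IsTree

theorem length_eq_dist_of_isPath (hG : G.IsTree) {p : G.Walk u v} (hp : p.IsPath) :
    p.length = G.dist u v := by
  obtain ⟨q, hq, hql⟩ := hG.connected.exists_path_of_dist u v
  rw [(hG.existsUnique_path u v).unique hp hq, hql]

theorem dist_getVert_of_isPath (hG : G.IsTree) {p : G.Walk u v} (hp : p.IsPath) {i : ℕ}
    (hi : i ≤ p.length) : G.dist u (p.getVert i) = i := by
  rw [← hG.length_eq_dist_of_isPath (hp.take i), Walk.take_length, inf_of_le_left hi]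

theorem mem_support_of_dist_add_dist_eq (hG : G.IsTree) {p : G.Walk u v} (hp : p.IsPath)
    (h : G.dist u x + G.dist x v = G.dist u v) : x ∈ p.support := by
  obtain ⟨q₁, hq₁⟩ := hG.connected.exists_walk_length_eq_dist u x
  obtain ⟨q₂, hq₂⟩ := hG.connected.exists_walk_length_eq_dist x v
  have hq : (q₁.append q₂).IsPath :=
    (q₁.append q₂).isPath_of_length_eq_dist (by rw [Walk.length_append, hq₁, hq₂, h])
  rw [(hG.existsUnique_path u v).unique hp hq]
  exact (Walk.mem_support_append_iff q₁ q₂).2 (Or.inl q₁.end_mem_support)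

theorem eq_of_dist_add_dist_eq (hG : G.IsTree) (hx : G.dist u x + G.dist x v = G.dist u v)
    (hy : G.dist u y + G.dist y v = G.dist u v) (h : G.dist u x = G.dist u y) : x = y := by
  obtain ⟨p, hp, -⟩ := hG.connected.exists_path_of_dist u v
  obtain ⟨i, rfl, hi⟩ :=
    Walk.mem_support_iff_exists_getVert.1 (hG.mem_support_of_dist_add_dist_eq hp hx)
  obtain ⟨j, rfl, hj⟩ :=
    Walk.mem_support_iff_exists_getVert.1 (hG.mem_support_of_dist_add_dist_eq hp hy)
  rw [hG.dist_getVert_of_isPath hp hi, hG.dist_getVert_of_isPath hp hj] at h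
  rw [h]

theorem eq_of_adj_of_dist_add_one_eq (hG : G.IsTree) (hx : G.Adj x v) (hy : G.Adj y v)
    (hxv : G.dist u x + 1 = G.dist u v) (hyv : G.dist u y + 1 = G.dist u v) : x = y :=
  hG.eq_of_dist_add_dist_eq (u := u) (v := v) (by rwa [dist_eq_one_iff_adj.2 hx])
    (by rwa [dist_eq_one_iff_adj.2 hy]) (by omega)

theorem even_dist_iff (hG : G.IsTree) (w u v : V) :
    Even (G.dist u v) ↔ (Even (G.dist w u) ↔ Even (G.dist w v)) := by
  obtain ⟨p, -, hp⟩ := hG.connected.exists_path_of_dist u v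
  let c : G.Coloring Bool := Coloring.mk (fun x => decide (Even (G.dist w x))) fun h => by
    rcases hG.dist_eq_dist_add_one_of_adj w h with h' | h' <;>
      simp only [h', ne_eq, decide_eq_decide, Nat.even_add_one] <;> tauto
  have h := c.even_length_iff_congr p
  change _ ↔ (decide (Even (G.dist w u)) = true ↔ decide (Even (G.dist w v)) = true) at h
  simpa [hp] using h

theorem dist_le_max_of_dist_add_dist_eq (hG : G.IsTree) (w : V) {a b c : V}
    (h : G.dist a b + G.dist b c = G.dist a c) :
    G.dist w b ≤ max (G.dist w a) (G.dist w c) := by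
  obtain ⟨p, hp, -⟩ := hG.connected.exists_path_of_dist a c
  obtain ⟨i, rfl, hi⟩ :=
    Walk.mem_support_iff_exists_getVert.1 (hG.mem_support_of_dist_add_dist_eq hp h)
  -- If the distance to `w` rose into `p_{j+1}` and then fell, `p_j` and `p_{j+2}` would both be
  -- the neighbour of `p_{j+1}` towards `w`.
  have hrise : ∀ j, j + 2 ≤ p.length →
      G.dist w (p.getVert j) < G.dist w (p.getVert (j + 1)) →
      G.dist w (p.getVert (j + 1)) < G.dist w (p.getVert (j + 1 + 1)) := by
    intro j hj hlt
    have h₁ := p.adj_getVert_succ (show j < p.length by omega)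
    have h₂ := p.adj_getVert_succ (show j + 1 < p.length by omega)
    have hup : G.dist w (p.getVert j) + 1 = G.dist w (p.getVert (j + 1)) := by
      rcases hG.dist_eq_dist_add_one_of_adj w h₁ with h' | h' <;> omega
    rcases hG.dist_eq_dist_add_one_of_adj w h₂ with hdown | hup'
    · have := hp.getVert_injOn (by simp; omega) (by simp; omega)
        (hG.eq_of_adj_of_dist_add_one_eq h₁ h₂.symm hup hdown.symm)
      omega
    · omega
  simpa using le_max_of_lt_succ_imp_lt_succ (f := fun j => G.dist w (p.getVert j)) hrise hi

theorem ncard_setOf_adj_dist_eq_add_one (hG : G.IsTree) (u : V) {a : V} (ha : a ≠ u) :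
    {b | G.Adj a b ∧ G.dist u b = G.dist u a + 1}.ncard = (G.neighborSet a).ncard - 1 := by
  have hpos := hG.connected.pos_dist_of_ne ha.symm
  obtain ⟨p, hpa, hp⟩ :=
    exists_adj_dist_eq_of_dist_eq_add_one (show G.dist u a = G.dist u a - 1 + 1 by omega)
  have hchildren : {b | G.Adj a b ∧ G.dist u b = G.dist u a + 1} = G.neighborSet a \ {p} := by
    ext b
    simp only [Set.mem_ofPred_eq, Set.mem_sdiff, mem_neighborSet, Set.mem_singleton_iff]
    constructor
    · rintro ⟨hab, hb⟩
      exact ⟨hab, by rintro rfl; omega⟩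
    · rintro ⟨hab, hbp⟩
      refine ⟨hab, ?_⟩
      rcases hG.dist_eq_dist_add_one_of_adj u hab with h | h
      · exact absurd (hG.eq_of_adj_of_dist_add_one_eq hab.symm hpa h.symm (by omega)) hbp
      · exact h
  rw [hchildren, Set.ncard_sdiff_singleton_of_mem (show p ∈ G.neighborSet a from hpa.symm)]

theorem ncard_setOf_dist_eq_succ (hG : G.IsTree) {r : ℕ}
    (hreg : ∀ v, (G.neighborSet v).ncard = r) (hr : 0 < r) (u : V) (k : ℕ) :
    {v | G.dist u v = k + 1}.ncard = r * (r - 1) ^ k := by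
  have hS := hG.connected.finite_setOf_dist_eq
    (fun v => Set.finite_of_ncard_pos (by rw [hreg]; exact hr)) u
  induction k with
  | zero => simpa [dist_eq_one_iff_adj, neighborSet] using hreg u
  | succ k ih =>
    classical
    set s := (hS (k + 1)).toFinset
    set t := (hS (k + 2)).toFinset
    have hchildren : ∀ a ∈ s, #(t.bipartiteAbove G.Adj a) = r - 1 := by
      intro a ha
      rw [Set.Finite.mem_toFinset, Set.mem_ofPred_eq] at ha
      rw [← hreg a, ← hG.ncard_setOf_adj_dist_eq_add_one u (a := a) (by rintro rfl; simp at ha),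
        ← Set.ncard_coe_finset, coe_bipartiteAbove, ha]
      congr 1
      ext b
      simp [t, and_comm]
    have hparent : ∀ b ∈ t, #(s.bipartiteBelow G.Adj b) = 1 := by
      intro b hb
      rw [Set.Finite.mem_toFinset, Set.mem_ofPred_eq] at hb
      obtain ⟨a, hab, ha⟩ := exists_adj_dist_eq_of_dist_eq_add_one hb
      refine card_eq_one.2 ⟨a, eq_singleton_iff_unique_mem.2 ⟨?_, fun a' ha' => ?_⟩⟩
      · simp [mem_bipartiteBelow, s, hab, ha]
      · simp only [mem_bipartiteBelow, s, Set.Finite.mem_toFinset, Set.mem_ofPred_eq] at ha'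
        exact hG.eq_of_adj_of_dist_add_one_eq (u := u) ha'.2 hab (by omega) (by omega)
    have hcount := card_mul_eq_card_mul G.Adj hchildren hparent
    rw [Set.ncard_eq_toFinset_card _ (hS (k + 1))] at ih
    rw [Set.ncard_eq_toFinset_card _ (hS (k + 2)), ← mul_one #t, ← hcount, ih]
    ring

theorem sum_comp_dist_eq (hG : G.IsTree) {r : ℕ}
    (hreg : ∀ v, (G.neighborSet v).ncard = r) (hr : 0 < r) (u : V) {d : ℕ} (s : Finset V)
    (hs : ↑s = {v | G.dist u v ≤ d}) (g : ℕ → ℤ) :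
    ∑ x ∈ s, g (G.dist u x) = g 0 + ∑ k ∈ range d, r * (r - 1 : ℤ) ^ k * g (k + 1) := by
  have hsphere₀ : {v | G.dist u v = 0} = {u} := by
    ext v
    simp [hG.connected.dist_eq_zero_iff, eq_comm]
  rw [Finset.sum_comp_eq_sum_range_ncard_smul _ s hs, sum_range_succ', hsphere₀, add_comm]
  simp [hG.ncard_setOf_dist_eq_succ hreg hr, Nat.cast_sub (Nat.one_le_of_lt hr), mul_assoc]

theorem ncard_graphAT_eq_card_even_dist (hG : G.IsTree) (s : Finset V)
    (hs : ∀ a ∈ s, ∀ c ∈ s, ∀ b, G.dist a b + G.dist b c = G.dist a c → b ∈ s) :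
    (graphAT G ↑s).ncard = #{p ∈ s ×ˢ s | Even (G.dist p.1 p.2)} := by
  rw [← Set.ncard_coe_finset]
  refine Set.ncard_congr (fun p _ => (p.1, p.2.2)) ?_ ?_ ?_
  · rintro ⟨a, b, c⟩ ⟨ha, -, hc, -, hac⟩
    simp only [mem_coe] at ha hc hac
    simp [ha, hc, ← hac]
  · rintro ⟨a, b, c⟩ ⟨a', b', c'⟩ ⟨-, -, -, hbc, hac⟩ ⟨-, -, -, hbc', hac'⟩ h
    simp only [Prod.mk.injEq] at h
    obtain ⟨rfl, rfl⟩ := h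
    simp only at hbc hac hbc' hac'
    rw [hG.eq_of_dist_add_dist_eq (u := a) (v := c) (x := b) (y := b') (by omega) (by omega)
      (by omega)]
  · rintro ⟨a, c⟩ hac
    simp only [coe_filter, mem_product, Set.mem_ofPred_eq] at hac
    obtain ⟨⟨ha, hc⟩, m, hm⟩ := hac
    obtain ⟨b, hab, hbc⟩ := (hG.connected a c).exists_dist_eq_and_dist_eq (k := m) (by omega)
    refine ⟨(a, b, c), ⟨ha, hs a ha c hc b (by omega), hc, ?_, ?_⟩, rfl⟩ <;> dsimp only <;> omega

end IsTree

end SimpleGraph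

/-- In an `r`-regular tree (`r ≥ 2`), every closed ball `A` of radius `d₀` around a
vertex `v₀` is finite and satisfies
`2r²·|AT(A)| = (r² + (r−2)²)·|A|² + 4(r−2)·|A| + 4`. -/
theorem tree_ball_AT {V : Type*} (G : SimpleGraph V) (r : ℕ) (hr : 2 ≤ r)
    (htree : G.IsTree) (hreg : ∀ v : V, (G.neighborSet v).ncard = r)
    (v₀ : V) (d₀ : ℕ) :
    {v : V | G.dist v₀ v ≤ d₀}.Finite ∧
    2 * r ^ 2 * (graphAT G {v : V | G.dist v₀ v ≤ d₀}).ncard =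
      (r ^ 2 + (r - 2) ^ 2) * {v : V | G.dist v₀ v ≤ d₀}.ncard ^ 2 +
        4 * (r - 2) * {v : V | G.dist v₀ v ≤ d₀}.ncard + 4 := by
  have hA := htree.connected.finite_setOf_dist_le
    (fun v => Set.finite_of_ncard_pos (by rw [hreg]; omega)) v₀ d₀
  refine ⟨hA, ?_⟩
  obtain ⟨s, hs⟩ := hA.exists_finset_coe
  have hconvex : ∀ a ∈ s, ∀ c ∈ s, ∀ b, G.dist a b + G.dist b c = G.dist a c → b ∈ s := by
    intro a ha c hc b hb
    rw [← mem_coe, hs] at ha hc ⊢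
    exact (htree.dist_le_max_of_dist_add_dist_eq v₀ hb).trans (max_le ha hc)
  have hAT : 2 * ((graphAT G ↑s).ncard : ℤ) = #s ^ 2 + (∑ x ∈ s, (-1) ^ G.dist v₀ x) ^ 2 := by
    rw [htree.ncard_graphAT_eq_card_even_dist s hconvex,
      filter_congr fun p _ => htree.even_dist_iff v₀ p.1 p.2]
    exact two_mul_card_filter_even_iff_even s (G.dist v₀)
  have hcard := htree.sum_comp_dist_eq hreg (by omega) v₀ s hs fun _ => 1
  have hsign := htree.sum_comp_dist_eq hreg (by omega) v₀ s hs fun k => (-1) ^ k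
  simp only [mul_one, pow_zero, sum_const, nsmul_one] at hcard hsign
  have hball : ((r : ℤ) - 2) * #s + 2 = r * (r - 1) ^ d₀ := by
    rw [hcard]
    exact sub_two_mul_one_add_sum_mul_pow _ _
  rw [hsign, one_add_sum_mul_pow_mul_neg_one_pow, mul_pow, ← pow_mul, mul_comm d₀, pow_mul,
    neg_one_sq, one_pow, one_mul] at hAT
  rw [← hs, Set.ncard_coe_finset]
  zify [hr]
  linear_combination (r : ℤ) ^ 2 * hAT - ((r - 2) * #s + 2 + r * (r - 1) ^ d₀) * hball
end

section
/- Let ℓ ≥ 1 be an integer and consider ℤ^ℓ with the ℓ¹ (lattice graph) metric d(a,b) = Σ_{i=1}^{ℓ} |a_i − b_i|. There exists a constant c_ℓ > 0 such that for every positive integer n, μ_n(ℤ^ℓ) ≥ c_ℓ · n^{3 − 1/ℓ}. -/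
/-!
If `t, u ≥ 0` coordinatewise and `∑ t = ∑ u`, then `(a, a + t, a + t + u)` is a 3-term
progression for the `ℓ¹` distance. Inside a cube of side `4ℓm`, let `a` and `t` range over
boxes of side `m` and `u` over a box of side `m` in all coordinates but the first, which is
then forced by `∑ u = ∑ t`; shifting the first coordinate of `t` by `(ℓ - 1)m` makes this
forced coordinate nonnegative. This gives `m ^ (3ℓ - 1)` progressions among `(4ℓm) ^ ℓ` points, and choosing
`m ≍ n ^ (1/ℓ)` and padding the cube to `n` points gives the bound.
-/

/-- The `ℓ¹` (lattice graph) distance on `ℤ^ℓ`. -/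
def latticeDist {ℓ : ℕ} (a b : Fin ℓ → ℤ) : ℤ :=
  ∑ i, |a i - b i|

/-- The set of 3-term arithmetic progressions, with respect to the `ℓ¹` distance on
`ℤ^ℓ`, with all entries in `A`. -/
def latticeAT {ℓ : ℕ} (A : Set (Fin ℓ → ℤ)) :
    Set ((Fin ℓ → ℤ) × (Fin ℓ → ℤ) × (Fin ℓ → ℤ)) :=
  {p | p.1 ∈ A ∧ p.2.1 ∈ A ∧ p.2.2 ∈ A ∧
    latticeDist p.1 p.2.1 = latticeDist p.2.1 p.2.2 ∧
    2 * latticeDist p.1 p.2.1 = latticeDist p.1 p.2.2}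

open Finset

section latticeAT

variable {ℓ : ℕ}

lemma latticeDist_add_right_of_nonneg (a : Fin ℓ → ℤ) {t : Fin ℓ → ℤ} (ht : 0 ≤ t) :
    latticeDist a (a + t) = ∑ i, t i :=
  sum_congr rfl fun i _ => by
    rw [Pi.add_apply, sub_add_cancel_left, abs_neg, abs_of_nonneg (ht i)]

lemma mk_add_add_mem_latticeAT {A : Set (Fin ℓ → ℤ)} {a t u : Fin ℓ → ℤ} (ha : a ∈ A)
    (hb : a + t ∈ A) (hc : a + t + u ∈ A) (ht : 0 ≤ t) (hu : 0 ≤ u)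
    (hsum : ∑ i, t i = ∑ i, u i) : (a, a + t, a + t + u) ∈ latticeAT A := by
  have hac : latticeDist a (a + t + u) = ∑ i, t i + ∑ i, u i := by
    rw [add_assoc, latticeDist_add_right_of_nonneg _ (add_nonneg ht hu)]
    exact sum_add_distrib
  refine ⟨ha, hb, hc, ?_, ?_⟩
  · rw [latticeDist_add_right_of_nonneg _ ht, latticeDist_add_right_of_nonneg _ hu, hsum]
  · rw [latticeDist_add_right_of_nonneg _ ht, hac, hsum, two_mul]

lemma Set.Finite.latticeAT {A : Set (Fin ℓ → ℤ)} (hA : A.Finite) : (latticeAT A).Finite :=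
  (hA.prod (hA.prod hA)).subset fun _ h => ⟨h.1, h.2.1, h.2.2.1⟩

lemma latticeAT_mono {A B : Set (Fin ℓ → ℤ)} (h : A ⊆ B) : latticeAT A ⊆ latticeAT B :=
  fun _ hp => ⟨h hp.1, h hp.2.1, h hp.2.2.1, hp.2.2.2⟩

lemma ncard_le_ncard_latticeAT {A : Set (Fin ℓ → ℤ)} (hA : A.Finite) :
    A.ncard ≤ (latticeAT A).ncard :=
  Set.ncard_le_ncard_of_injOn (fun x => (x, x, x))
    (fun _ hx => ⟨hx, hx, hx, rfl, by simp [latticeDist]⟩) (fun _ _ _ _ h => congrArg Prod.fst h)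
    hA.latticeAT

end latticeAT

noncomputable def intCube (ι : Type*) [Fintype ι] [DecidableEq ι] (r : ℕ) : Finset (ι → ℤ) :=
  Fintype.piFinset fun _ => Ico 0 (r : ℤ)

lemma card_intCube (ι : Type*) [Fintype ι] [DecidableEq ι] (r : ℕ) :
    (intCube ι r).card = r ^ Fintype.card ι := by
  simp [intCube]

lemma mem_intCube {ι : Type*} [Fintype ι] [DecidableEq ι] {r : ℕ} {x : ι → ℤ} :
    x ∈ intCube ι r ↔ ∀ i, 0 ≤ x i ∧ x i < r := by
  simp [intCube]

def cubeProgression (k m : ℕ) (p : (Fin (k + 1) → ℤ) × (Fin (k + 1) → ℤ) × (Fin k → ℤ)) :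
    (Fin (k + 1) → ℤ) × (Fin (k + 1) → ℤ) × (Fin (k + 1) → ℤ) :=
  let t := p.2.1 + Pi.single 0 (k * m : ℤ)
  (p.1, p.1 + t, p.1 + t + Fin.cons (∑ i, t i - ∑ j, p.2.2 j) p.2.2)

lemma cubeProgression_injective (k m : ℕ) : Function.Injective (cubeProgression k m) := by
  rintro ⟨a, s, w⟩ ⟨a', s', w'⟩ h
  simp only [cubeProgression, Prod.mk.injEq] at h
  obtain ⟨rfl, h₂, h₃⟩ := h
  obtain rfl := add_right_cancel (add_left_cancel h₂)
  obtain rfl := (Fin.cons_injective2 (add_left_cancel h₃)).2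
  rfl

lemma sum_le_card_mul_of_mem_intCube {ι : Type*} [Fintype ι] [DecidableEq ι] {r : ℕ}
    {x : ι → ℤ} (hx : x ∈ intCube ι r) : ∑ i, x i ≤ Fintype.card ι * r := by
  calc ∑ i, x i ≤ ∑ _i : ι, (r : ℤ) := sum_le_sum fun i _ => (mem_intCube.1 hx i).2.le
    _ = Fintype.card ι * r := by simp

lemma pow_le_ncard_latticeAT_intCube (k m : ℕ) :
    m ^ (3 * k + 2) ≤
      (latticeAT (↑(intCube (Fin (k + 1)) (4 * (k + 1) * m)) : Set (Fin (k + 1) → ℤ))).ncard := by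
  set D := intCube (Fin (k + 1)) m ×ˢ intCube (Fin (k + 1)) m ×ˢ intCube (Fin k) m
  have hD : D.card = m ^ (3 * k + 2) := by
    simp only [D, card_product, card_intCube, Fintype.card_fin, ← pow_add]
    ring_nf
  rw [← hD, ← Set.ncard_coe_finset]
  refine Set.ncard_le_ncard_of_injOn _ ?_ (cubeProgression_injective k m).injOn
    (Set.toFinite _).latticeAT
  rintro ⟨a, s, w⟩ hp
  simp only [D, coe_product, Set.mem_prod, mem_coe] at hp
  obtain ⟨ha, hs, hw⟩ := hp
  have hs_le := sum_le_card_mul_of_mem_intCube hs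
  have hw_le := sum_le_card_mul_of_mem_intCube hw
  simp only [Fintype.card_fin, Nat.cast_add, Nat.cast_one] at hs_le hw_le
  rw [mem_intCube] at ha hs hw
  set t := s + Pi.single 0 (k * m : ℤ)
  set u : Fin (k + 1) → ℤ := Fin.cons (∑ i, t i - ∑ j, w j) w
  change (a, a + t, a + t + u) ∈ _
  have hsum_t : ∑ i, t i = ∑ i, s i + k * m := by simp [t, sum_add_distrib]
  have ht : 0 ≤ t := add_nonneg (fun i => (hs i).1) (Pi.single_nonneg.2 (by positivity))
  have hu : 0 ≤ u := by
    intro i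
    refine Fin.cases ?_ (fun j => (hw j).1) i
    have hs_nonneg := sum_nonneg fun i (_ : i ∈ univ) => (hs i).1
    simp only [u, Fin.cons_zero, Pi.zero_apply]
    linarith
  have hsum : ∑ i, t i = ∑ i, u i := by simp [u, Fin.sum_univ_succ]
  have ht_le : ∀ i, t i ≤ ∑ i, t i := fun i => single_le_sum (fun j _ => ht j) (mem_univ i)
  have hu_le : ∀ i, u i ≤ ∑ i, t i :=
    fun i => hsum ▸ single_le_sum (fun j _ => hu j) (mem_univ i)
  have hmem : ∀ x : Fin (k + 1) → ℤ, 0 ≤ x → (∀ i, x i ≤ a i + 2 * ∑ i, t i) →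
      x ∈ (↑(intCube (Fin (k + 1)) (4 * (k + 1) * m)) : Set (Fin (k + 1) → ℤ)) := by
    intro x hx0 hx
    rw [mem_coe, mem_intCube]
    intro i
    refine ⟨hx0 i, (hx i).trans_lt ?_⟩
    push_cast
    nlinarith [(ha i).2]
  clear_value t u
  have ha0 : 0 ≤ a := fun i => (ha i).1
  have ht_sum : 0 ≤ ∑ i, t i := sum_nonneg fun i _ => ht i
  refine mk_add_add_mem_latticeAT (hmem a ha0 fun i => by linarith)
    (hmem _ (add_nonneg ha0 ht) fun i => ?_)
    (hmem _ (add_nonneg (add_nonneg ha0 ht) hu) fun i => ?_) ht hu hsum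
  all_goals simp only [Pi.add_apply]; linarith [ht_le i, hu_le i]

lemma exists_ncard_eq_pow_le_ncard_latticeAT (k m n : ℕ) (hn : 0 < n)
    (hmn : (4 * (k + 1) * m) ^ (k + 1) ≤ n) :
    ∃ A : Set (Fin (k + 1) → ℤ), A.Finite ∧ A.ncard = n ∧
      n ≤ (latticeAT A).ncard ∧ m ^ (3 * k + 2) ≤ (latticeAT A).ncard := by
  set B : Set (Fin (k + 1) → ℤ) := ↑(intCube (Fin (k + 1)) (4 * (k + 1) * m))
  have hB : B.ncard ≤ n := by simpa [B, card_intCube] using hmn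
  obtain ⟨A, hBA, -, hA⟩ := Set.infinite_univ.exists_superset_ncard_eq (Set.subset_univ B)
    (Set.toFinite B) hB
  have hAfin : A.Finite := Set.finite_of_ncard_pos (hA ▸ hn)
  refine ⟨A, hAfin, hA, hA ▸ ncard_le_ncard_latticeAT hAfin, ?_⟩
  exact (pow_le_ncard_latticeAT_intCube k m).trans
    (Set.ncard_le_ncard (latticeAT_mono hBA) hAfin.latticeAT)

lemma pow_le_mul_of_floor_div_pow_le {x L N : ℝ} (hx : 0 ≤ x) (hL : 0 < L) (hN : 1 ≤ N)
    (p : ℕ) (h : (⌊x / L⌋₊ : ℝ) ^ p ≤ N) : x ^ p ≤ (2 * L) ^ p * N := by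
  set m := ⌊x / L⌋₊
  have hxm : x < L * (m + 1) := by
    have := Nat.lt_floor_add_one (x / L)
    rwa [div_lt_iff₀ hL, mul_comm] at this
  rcases Nat.eq_zero_or_pos m with hm | hm
  · calc x ^ p ≤ (2 * L) ^ p := pow_le_pow_left₀ hx (by simp [hm] at hxm; linarith) p
      _ ≤ (2 * L) ^ p * N := le_mul_of_one_le_right (by positivity) hN
  · have hm1 : (1 : ℝ) ≤ m := by exact_mod_cast hm
    calc x ^ p ≤ (2 * L * m) ^ p := pow_le_pow_left₀ hx (by nlinarith) p
      _ ≤ (2 * L) ^ p * N := by rw [mul_pow]; gcongr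

lemma rpow_three_sub_one_div_eq (y : ℝ) (hy : 0 ≤ y) (k : ℕ) :
    y ^ ((3 : ℝ) - 1 / ((k + 1 : ℕ) : ℝ)) = (y ^ (1 / ((k + 1 : ℕ) : ℝ))) ^ (3 * k + 2) := by
  rw [← Real.rpow_natCast, ← Real.rpow_mul hy]
  congr 1
  push_cast
  field_simp
  ring

/-- For the lattice `ℤ^ℓ` with the `ℓ¹` metric, there is a constant `c_ℓ > 0` such that
`μ_n(ℤ^ℓ) ≥ c_ℓ · n^(3 − 1/ℓ)` for every positive integer `n`. -/
theorem mu_lattice_lower (ℓ : ℕ) (hℓ : 1 ≤ ℓ) :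
    ∃ c : ℝ, 0 < c ∧ ∀ n : ℕ, 0 < n →
      ∃ A : Set (Fin ℓ → ℤ), A.Finite ∧ A.ncard = n ∧
        c * (n : ℝ) ^ ((3 : ℝ) - 1 / ℓ) ≤ ((latticeAT A).ncard : ℝ) := by
  obtain ⟨k, rfl⟩ := Nat.exists_eq_add_of_le' hℓ
  set L : ℝ := 4 * (k + 1)
  refine ⟨1 / (2 * L) ^ (3 * k + 2), by positivity, fun n hn => ?_⟩
  set x := (n : ℝ) ^ (1 / ((k + 1 : ℕ) : ℝ))
  have hx : 0 ≤ x := by positivity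
  set m := ⌊x / L⌋₊
  have hmn : (4 * (k + 1) * m) ^ (k + 1) ≤ n := by
    have hLm : L * m ≤ x := by
      have := Nat.floor_le (div_nonneg hx (by positivity : (0 : ℝ) ≤ L))
      rwa [le_div_iff₀ (by positivity), mul_comm] at this
    have : (L * m) ^ (k + 1) ≤ (n : ℝ) := by
      calc (L * m) ^ (k + 1) ≤ x ^ (k + 1) := by gcongr
        _ = n := by
          simp only [x, one_div]
          exact Real.rpow_inv_natCast_pow n.cast_nonneg k.succ_ne_zero
    simp only [L] at this
    exact_mod_cast this
  obtain ⟨A, hA, hAn, hnA, hmA⟩ := exists_ncard_eq_pow_le_ncard_latticeAT k m n hn hmn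
  refine ⟨A, hA, hAn, ?_⟩
  rw [rpow_three_sub_one_div_eq _ n.cast_nonneg, one_div_mul_eq_div, div_le_iff₀' (by positivity)]
  exact pow_le_mul_of_floor_div_pow_le hx (by positivity) (by exact_mod_cast hn.trans_le hnA)
    _ (by exact_mod_cast hmA)
end

section
/- There exists a metric space M₀ such that for every positive integer n, μ_n(M₀) = (n−2)·⌊n/2⌋·⌈n/2⌉ + n (as an integer). (Such a space is the complete bipartite graph with two infinite parts L and R, with the graph metric: distinct points in the same part are at distance 2, and points in different parts are at distance 1.) -/
/-! Take the complete bipartite graph on two infinite parts with its graph metric (distance 1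
across the parts, 2 inside a part). A non-constant 3-term progression there is exactly a pair of
distinct points of one part together with a midpoint in the other part. So a set with `p` points
on one side and `q` on the other, `n = p + q`, carries `n + (n - 2) p q` progressions, which is
largest for the balanced split `p = ⌊n/2⌋`, `q = ⌈n/2⌉`; with infinite parts every split occurs. -/

open Finset

theorem Nat.mul_le_div_two_mul_succ_div_two (p q : ℕ) :
    p * q ≤ (p + q) / 2 * ((p + q + 1) / 2) := by
  wlog h : p ≤ q
  · rw [mul_comm, add_comm]
    exact this q p (by omega)
  obtain ⟨d, hd⟩ : ∃ d, (p + q) / 2 = p + d := ⟨(p + q) / 2 - p, by omega⟩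
  obtain ⟨e, he⟩ : ∃ e, (p + q + 1) / 2 = p + e := ⟨(p + q + 1) / 2 - p, by omega⟩
  obtain rfl : q = p + d + e := by omega
  rw [hd, he]
  nlinarith [Nat.zero_le (d * e)]

theorem Nat.mul_self_sub_mul_add_mul_self_sub_mul (p q : ℕ) :
    (p * p - p) * q + (q * q - q) * p = (p + q - 2) * p * q := by
  rcases Nat.eq_zero_or_pos p with rfl | hp
  · simp
  rcases Nat.eq_zero_or_pos q with rfl | hq
  · simp
  zify [Nat.le_mul_self p, Nat.le_mul_self q, show 2 ≤ p + q by omega]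
  ring

/-- A type synonym, since `α ⊕ β` already carries Mathlib's disjoint-union metric. -/
def CompleteBipartiteSpace (α β : Type*) := α ⊕ β

namespace CompleteBipartiteSpace

variable {α β : Type*}

def isLeft (x : CompleteBipartiteSpace α β) : Bool := Sum.isLeft x

open Classical in
noncomputable instance : MetricSpace (CompleteBipartiteSpace α β) where
  dist x y := if x = y then 0 else if x.isLeft = y.isLeft then 2 else 1
  dist_self _ := if_pos rfl
  dist_comm x y := by simp only [eq_comm]
  dist_triangle x y z := by split_ifs <;> norm_num <;> simp_all
  eq_of_dist_eq_zero {x y} := by split_ifs <;> simp_all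

instance [DecidableEq α] [DecidableEq β] : DecidableEq (CompleteBipartiteSpace α β) :=
  inferInstanceAs (DecidableEq (α ⊕ β))

theorem isAP3_iff {a b c : CompleteBipartiteSpace α β} :
    IsAP3 a b c ↔ a = b ∧ b = c ∨ a ≠ c ∧ a.isLeft = c.isLeft ∧ b.isLeft ≠ a.isLeft := by
  simp only [IsAP3, dist]
  split_ifs <;> simp_all

theorem AT_coe_finset [DecidableEq α] [DecidableEq β] (u : Finset (CompleteBipartiteSpace α β)) :
    AT (u : Set (CompleteBipartiteSpace α β)) =
      ↑(u.image (fun x => (x, x, x)) ∪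
        ({x ∈ u | x.isLeft}.offDiag ×ˢ {x ∈ u | ¬x.isLeft} ∪
          {x ∈ u | ¬x.isLeft}.offDiag ×ˢ {x ∈ u | x.isLeft}).image
            (fun x => (x.1.1, x.2, x.1.2))) := by
  ext ⟨a, b, c⟩
  simp only [AT, isAP3_iff, Set.mem_ofPred_eq, coe_union, coe_image, Set.mem_union,
    Set.mem_image, mem_coe, mem_product, mem_offDiag, mem_filter, Prod.exists, Prod.mk.injEq]
  constructor
  · rintro ⟨ha, hb, hc, ⟨rfl, rfl⟩ | ⟨hac, hac', hba⟩⟩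
    · exact .inl ⟨a, ha, rfl, rfl, rfl⟩
    · refine .inr ⟨a, c, b, ?_, rfl, rfl, rfl⟩
      cases ha' : a.isLeft <;> simp_all
  · rintro (⟨x, hx, rfl, rfl, rfl⟩ | ⟨a, c, b, h, rfl, rfl, rfl⟩)
    · simp [hx]
    · grind

theorem card_filter_isLeft_add_card_filter_not_isLeft (u : Finset (CompleteBipartiteSpace α β)) :
    #{x ∈ u | x.isLeft} + #{x ∈ u | ¬x.isLeft} = #u :=
  card_filter_add_card_filter_not _

theorem ncard_AT (u : Finset (CompleteBipartiteSpace α β)) :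
    (AT (u : Set (CompleteBipartiteSpace α β))).ncard =
      (#u - 2) * #{x ∈ u | x.isLeft} * #{x ∈ u | ¬x.isLeft} + #u := by
  classical
  rw [AT_coe_finset, Set.ncard_coe_finset, card_union_of_disjoint, card_image_of_injective,
    card_image_of_injective, card_union_of_disjoint, card_product, card_product, offDiag_card,
    offDiag_card, Nat.mul_self_sub_mul_add_mul_self_sub_mul,
    card_filter_isLeft_add_card_filter_not_isLeft, Nat.add_comm]
  · exact disjoint_product.2 (.inr (disjoint_filter_filter_not _ _ _).symm)
  · rintro ⟨⟨a, c⟩, b⟩ ⟨⟨a', c'⟩, b'⟩ h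
    simp_all
  · exact fun _ _ h => congrArg Prod.fst h
  · simp only [disjoint_left, mem_image, mem_union, mem_product, mem_offDiag, Prod.exists]
    rintro _ ⟨x, -, rfl⟩ ⟨a, c, b, h, heq⟩
    simp only [Prod.mk.injEq] at heq
    obtain ⟨rfl, -, rfl⟩ := heq
    tauto

theorem exists_finset_card_filter_isLeft [Infinite α] [Infinite β] (p q : ℕ) :
    ∃ u : Finset (CompleteBipartiteSpace α β),
      #{x ∈ u | x.isLeft} = p ∧ #{x ∈ u | ¬x.isLeft} = q := by
  classical
  obtain ⟨s, rfl⟩ := Infinite.exists_subset_card_eq α p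
  obtain ⟨t, rfl⟩ := Infinite.exists_subset_card_eq β q
  refine ⟨s.map .inl ∪ t.map .inr, ?_, ?_⟩
  · rw [filter_union, filter_true_of_mem, filter_false_of_mem, union_empty]
    · exact card_map _
    · exact forall_mem_map.2 fun _ _ => Bool.false_ne_true
    · exact forall_mem_map.2 fun _ _ => rfl
  · rw [filter_union, filter_false_of_mem, filter_true_of_mem, empty_union]
    · exact card_map _
    · exact forall_mem_map.2 fun _ _ => Bool.false_ne_true
    · exact forall_mem_map.2 fun _ _ h => h rfl

end CompleteBipartiteSpace

/-- There is a metric space `M₀` such that for every positive integer `n`,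
`μ_n(M₀) = (n−2)·⌊n/2⌋·⌈n/2⌉ + n`. -/
theorem exists_metric_space_mu_eq :
    ∃ (M₀ : Type) (_ : MetricSpace M₀),
      ∀ n : ℕ, 0 < n →
        IsGreatest {k : ℕ | ∃ A : Set M₀, A.Finite ∧ A.ncard = n ∧ (AT A).ncard = k}
          ((n - 2) * (n / 2) * ((n + 1) / 2) + n) := by
  refine ⟨CompleteBipartiteSpace ℕ ℕ, inferInstance, fun n _ => ⟨?_, ?_⟩⟩
  · obtain ⟨u, hL, hR⟩ := CompleteBipartiteSpace.exists_finset_card_filter_isLeft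
      (α := ℕ) (β := ℕ) (n / 2) ((n + 1) / 2)
    have hu : #u = n := by
      rw [← CompleteBipartiteSpace.card_filter_isLeft_add_card_filter_not_isLeft, hL, hR]
      omega
    refine ⟨u, u.finite_toSet, by rw [Set.ncard_coe_finset, hu], ?_⟩
    rw [CompleteBipartiteSpace.ncard_AT, hL, hR, hu]
  · rintro _ ⟨A, hA, rfl, rfl⟩
    lift A to Finset (CompleteBipartiteSpace ℕ ℕ) using hA
    rw [CompleteBipartiteSpace.ncard_AT, Set.ncard_coe_finset, mul_assoc, mul_assoc]
    refine Nat.add_le_add_right (Nat.mul_le_mul_left _ ?_) _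
    simpa only [CompleteBipartiteSpace.card_filter_isLeft_add_card_filter_not_isLeft] using
      Nat.mul_le_div_two_mul_succ_div_two #{x ∈ A | x.isLeft} #{x ∈ A | ¬x.isLeft}
end
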